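/- arXiv:1702.06485 — 6 statements merged into one kernel-verified Lean document; each statement's English description precedes it below -/
import Mathlib

section
/- Let 1 ≤ p < ∞ and suppose sup_{x,y∈U_i} m_w(x,y) ≤ C_m for all i ∈ I, where m_w(x,y) = max(w(x)/w(y), w(y)/w(x)). Then there exist constants 0 < c ≤ C < ∞, depending only on N, C_m and p, such that for every sequence (λ_i)_{i∈I} of complex numbers (with both sides possibly infinite): c (Σ_{i∈I} |λ_i|^p d_p(i)^p)^{1/p} ≤ ( ∫_X (Σ_{i∈I} |λ_i| μ(U_i)^{-1} χ_{U_i}(y))^p w(y)^p dμ(y) )^{1/p} ≤ C (Σ_{i∈I} |λ_i|^p d_p(i)^p)^{1/p}, where d_p(i) = μ(U_i)^{1/p − 1} w̃(i) and w̃(i) = sup_{x∈U_i} w(x). (Theorem 5.2(c), natural sequence space: (L^p_w)^♮ = ℓ^p_{d_p} with equivalent norms.) -/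
/-!
Write `F = ∑ᵢ aᵢ 𝟙_{Uᵢ}` with `aᵢ = |λᵢ| μ(Uᵢ)⁻¹`. At every point at most `N` terms of `F` are
nonzero, so `∑ᵢ aᵢᵖ 𝟙_{Uᵢ} ≤ Fᵖ ≤ N^{p-1} ∑ᵢ aᵢᵖ 𝟙_{Uᵢ}`; integrating against `wᵖ`, the `p`-norm
of `F` is comparable to `∑ᵢ aᵢᵖ ∫_{Uᵢ} wᵖ dμ`. Since `w` oscillates by at most the factor `C_m` on
each `Uᵢ`, the integral `∫_{Uᵢ} wᵖ dμ` is comparable to `w̃(i)ᵖ μ(Uᵢ)`, and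
`aᵢᵖ w̃(i)ᵖ μ(Uᵢ) = |λᵢ|ᵖ d_p(i)ᵖ`.
-/

open MeasureTheory
open scoped ENNReal NNReal

namespace ENNReal

variable {ι : Type*} {p : ℝ}

theorem sum_rpow_le_rpow_sum (s : Finset ι) (f : ι → ℝ≥0∞) (hp : 1 ≤ p) :
    ∑ i ∈ s, f i ^ p ≤ (∑ i ∈ s, f i) ^ p := by
  classical
  induction s using Finset.induction_on with
  | empty => simp [zero_rpow_of_pos (zero_lt_one.trans_le hp)]
  | insert a s ha ih =>
    rw [Finset.sum_insert ha, Finset.sum_insert ha]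
    exact (add_le_add le_rfl ih).trans (add_rpow_le_rpow_add _ _ hp)

theorem tsum_rpow_le_rpow_tsum (f : ι → ℝ≥0∞) (hp : 1 ≤ p) :
    ∑' i, f i ^ p ≤ (∑' i, f i) ^ p := by
  rw [ENNReal.tsum_eq_iSup_sum]
  exact iSup_le fun s => (sum_rpow_le_rpow_sum s f hp).trans
    (rpow_le_rpow (ENNReal.sum_le_tsum s) (zero_le_one.trans hp))

theorem rpow_tsum_le_mul_tsum_rpow {f : ι → ℝ≥0∞} {N : ℕ}
    (hf : (Function.support f).encard ≤ N) (hp : 1 ≤ p) :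
    (∑' i, f i) ^ p ≤ (N : ℝ≥0∞) ^ (p - 1) * ∑' i, f i ^ p := by
  have hfin : (Function.support f).Finite := Set.finite_of_encard_le_coe hf
  have hcard : hfin.toFinset.card ≤ N := by
    rw [hfin.encard_eq_coe_toFinset_card] at hf
    exact_mod_cast hf
  rw [tsum_eq_sum (s := hfin.toFinset) (by simp)]
  calc (∑ i ∈ hfin.toFinset, f i) ^ p
      ≤ (hfin.toFinset.card : ℝ≥0∞) ^ (p - 1) * ∑ i ∈ hfin.toFinset, f i ^ p :=
        rpow_sum_le_const_mul_sum_rpow _ _ hp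
    _ ≤ (N : ℝ≥0∞) ^ (p - 1) * ∑' i, f i ^ p :=
        mul_le_mul' (rpow_le_rpow (by exact_mod_cast hcard) (by linarith)) (ENNReal.sum_le_tsum _)

theorem inv_rpow_mul_self {m : ℝ≥0∞} (hm₀ : m ≠ 0) (hm : m ≠ ∞) (hp : p ≠ 0) :
    m⁻¹ ^ p * m = (m ^ (1 / p - 1)) ^ p := by
  rw [← rpow_mul, ← rpow_neg_one, ← rpow_mul]
  nth_rewrite 2 [← rpow_one m]
  rw [← rpow_add _ _ hm₀ hm]
  congr 1
  field_simp
  ring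

theorem mul_indicator_one_rpow {X : Type*} (a : ℝ≥0∞) (s : Set X) (y : X) (hp : 0 < p) :
    (a * s.indicator (fun _ => 1) y) ^ p = a ^ p * s.indicator (fun _ => 1) y := by
  by_cases hy : y ∈ s <;> simp [hy, zero_rpow_of_pos hp]

theorem ofReal_le_ofReal_mul_of_max_div_le {x y C : ℝ} (hx : 0 < x) (hy : 0 < y)
    (h : max (x / y) (y / x) ≤ C) : ENNReal.ofReal x ≤ ENNReal.ofReal C * ENNReal.ofReal y := by
  have hxy : x / y ≤ C := (le_max_left _ _).trans h
  rw [← ofReal_mul ((div_pos hx hy).le.trans hxy)]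
  exact ofReal_le_ofReal ((div_le_iff₀ hy).mp hxy)

end ENNReal

namespace MeasureTheory

variable {X : Type*} [MeasurableSpace X] {μ : Measure X} {p : ℝ}

theorem setLIntegral_rpow_le_iSup_rpow_mul (w : X → ℝ≥0∞) (s : Set X) (hp : 0 ≤ p) :
    ∫⁻ y in s, w y ^ p ∂μ ≤ (⨆ x ∈ s, w x) ^ p * μ s := by
  rw [← setLIntegral_const]
  exact setLIntegral_mono measurable_const fun y hy =>
    ENNReal.rpow_le_rpow (le_biSup w hy) hp

theorem iSup_rpow_mul_le_setLIntegral_rpow {w : X → ℝ≥0∞} (hw : Measurable w) {s : Set X}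
    {K : ℝ≥0∞} (hK : ∀ x ∈ s, ∀ y ∈ s, w x ≤ K * w y) (hp : 0 ≤ p) :
    (⨆ x ∈ s, w x) ^ p * μ s ≤ K ^ p * ∫⁻ y in s, w y ^ p ∂μ := by
  calc (⨆ x ∈ s, w x) ^ p * μ s = ∫⁻ _ in s, (⨆ x ∈ s, w x) ^ p ∂μ :=
        (setLIntegral_const _ _).symm
    _ ≤ ∫⁻ y in s, (K * w y) ^ p ∂μ :=
        setLIntegral_mono (by fun_prop) fun y hy =>
          ENNReal.rpow_le_rpow (iSup₂_le fun x hx => hK x hx y hy) hp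
    _ = K ^ p * ∫⁻ y in s, w y ^ p ∂μ := by
        simp_rw [ENNReal.mul_rpow_of_nonneg _ _ hp]
        exact lintegral_const_mul _ (hw.pow_const p)

variable {I : Type*} [Countable I] {U : I → Set X}

theorem lintegral_tsum_mul_indicator_one_mul (hU : ∀ i, MeasurableSet (U i)) {g : X → ℝ≥0∞}
    (hg : Measurable g) (a : I → ℝ≥0∞) :
    ∫⁻ y, (∑' i, a i * (U i).indicator (fun _ => 1) y) * g y ∂μ
      = ∑' i, a i * ∫⁻ y in U i, g y ∂μ := by
  simp_rw [← ENNReal.tsum_mul_right]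
  refine (lintegral_tsum fun i => ?_).trans (tsum_congr fun i => ?_)
  · exact (((measurable_const.indicator (hU i)).const_mul _).mul hg).aemeasurable
  simp_rw [mul_assoc, ← Set.indicator_mul_left, one_mul]
  rw [lintegral_const_mul _ (hg.indicator (hU i)), lintegral_indicator (hU i)]

variable {w : X → ℝ≥0∞}

theorem tsum_rpow_mul_setLIntegral_le (hU : ∀ i, MeasurableSet (U i)) (hw : Measurable w)
    (hp : 1 ≤ p) (a : I → ℝ≥0∞) :
    ∑' i, a i ^ p * ∫⁻ y in U i, w y ^ p ∂μ
      ≤ ∫⁻ y, (∑' i, a i * (U i).indicator (fun _ => 1) y) ^ p * w y ^ p ∂μ := by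
  rw [← lintegral_tsum_mul_indicator_one_mul hU (hw.pow_const p)]
  refine lintegral_mono fun y => mul_le_mul_left ?_ _
  simp_rw [← ENNReal.mul_indicator_one_rpow _ _ y (zero_lt_one.trans_le hp)]
  exact ENNReal.tsum_rpow_le_rpow_tsum _ hp

theorem lintegral_rpow_tsum_le {N : ℕ} (hN : ∀ y, {i | y ∈ U i}.encard ≤ N)
    (hU : ∀ i, MeasurableSet (U i)) (hw : Measurable w) (hp : 1 ≤ p) (a : I → ℝ≥0∞) :
    ∫⁻ y, (∑' i, a i * (U i).indicator (fun _ => 1) y) ^ p * w y ^ p ∂μ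
      ≤ (N : ℝ≥0∞) ^ (p - 1) * ∑' i, a i ^ p * ∫⁻ y in U i, w y ^ p ∂μ := by
  rw [← lintegral_tsum_mul_indicator_one_mul hU (hw.pow_const p),
    ← lintegral_const_mul' _ _ (ENNReal.rpow_ne_top_of_nonneg (by linarith) (by simp))]
  refine lintegral_mono fun y => ?_
  have hsupp : (Function.support fun i => a i * (U i).indicator (fun _ => 1) y).encard ≤ N :=
    (Set.encard_le_encard (Function.support_subset_iff'.mpr fun i (hy : y ∉ U i) => by rw [Set.indicator_of_notMem hy, mul_zero])).trans
      (hN y)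
  simp_rw [← ENNReal.mul_indicator_one_rpow _ _ y (zero_lt_one.trans_le hp), ← mul_assoc]
  exact mul_le_mul_left (ENNReal.rpow_tsum_le_mul_tsum_rpow hsupp hp) _

end MeasureTheory

theorem stmt_3_general
    {X : Type*} [MeasurableSpace X] (μ : Measure X)
    {I : Type*} [Countable I] (U : I → Set X)
    (hUmeas : ∀ i, MeasurableSet (U i))
    (hUpos : ∀ i, 0 < μ (U i)) (hUfin : ∀ i, μ (U i) < ∞)
    (N : ℕ) (hN : ∀ x : X, {i : I | x ∈ U i}.encard ≤ N)
    (w : X → ℝ) (hw : ∀ x, 0 < w x) (hwm : Measurable w)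
    (p : ℝ) (hp : 1 ≤ p)
    (Cm : ℝ) (hCm : ∀ i, ∀ x ∈ U i, ∀ y ∈ U i, max (w x / w y) (w y / w x) ≤ Cm) :
    ∃ c C : ℝ≥0∞, 0 < c ∧ c ≤ C ∧ C < ∞ ∧ ∀ lam : I → ℂ,
      c * (∑' i, (‖lam i‖₊ : ℝ≥0∞) ^ p
            * (μ (U i) ^ (1/p - 1) * ⨆ x ∈ U i, ENNReal.ofReal (w x)) ^ p) ^ (1/p)
        ≤ (∫⁻ y, (∑' i, (‖lam i‖₊ : ℝ≥0∞) * (μ (U i))⁻¹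
              * (U i).indicator (fun _ => (1 : ℝ≥0∞)) y) ^ p
            * ENNReal.ofReal (w y) ^ p ∂μ) ^ (1/p)
      ∧ (∫⁻ y, (∑' i, (‖lam i‖₊ : ℝ≥0∞) * (μ (U i))⁻¹
              * (U i).indicator (fun _ => (1 : ℝ≥0∞)) y) ^ p
            * ENNReal.ofReal (w y) ^ p ∂μ) ^ (1/p)
        ≤ C * (∑' i, (‖lam i‖₊ : ℝ≥0∞) ^ p
            * (μ (U i) ^ (1/p - 1) * ⨆ x ∈ U i, ENNReal.ofReal (w x)) ^ p) ^ (1/p) := by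
  have hp₀ : 0 < p := by linarith
  have hw' : Measurable fun y => ENNReal.ofReal (w y) := hwm.ennreal_ofReal
  set K := ENNReal.ofReal Cm
  have hK : ∀ i, ∀ x ∈ U i, ∀ y ∈ U i, ENNReal.ofReal (w x) ≤ K * ENNReal.ofReal (w y) :=
    fun i x hx y hy => ENNReal.ofReal_le_ofReal_mul_of_max_div_le (hw x) (hw y) (hCm i x hx y hy)
  refine ⟨K⁻¹ ⊓ 1, ((N : ℝ≥0∞) ^ (p - 1)) ^ (1 / p) ⊔ 1,
    lt_min (ENNReal.inv_pos.mpr ENNReal.ofReal_ne_top) one_pos, inf_le_right.trans le_sup_right,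
    max_lt (ENNReal.rpow_lt_top_of_nonneg (by positivity)
      (ENNReal.rpow_ne_top_of_nonneg (by linarith) (by simp))) ENNReal.one_lt_top, fun lam => ?_⟩
  set a : I → ℝ≥0∞ := fun i => ‖lam i‖₊ * (μ (U i))⁻¹
  set S := ∑' i, (‖lam i‖₊ : ℝ≥0∞) ^ p
    * (μ (U i) ^ (1/p - 1) * ⨆ x ∈ U i, ENNReal.ofReal (w x)) ^ p
  set F := ∫⁻ y, (∑' i, (‖lam i‖₊ : ℝ≥0∞) * (μ (U i))⁻¹
    * (U i).indicator (fun _ => (1 : ℝ≥0∞)) y) ^ p * ENNReal.ofReal (w y) ^ p ∂μ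
  set D := ∑' i, a i ^ p * ∫⁻ y in U i, ENNReal.ofReal (w y) ^ p ∂μ
  have hterm : ∀ i, (‖lam i‖₊ : ℝ≥0∞) ^ p
      * (μ (U i) ^ (1/p - 1) * ⨆ x ∈ U i, ENNReal.ofReal (w x)) ^ p
      = a i ^ p * ((⨆ x ∈ U i, ENNReal.ofReal (w x)) ^ p * μ (U i)) := by
    intro i
    simp only [a, ENNReal.mul_rpow_of_nonneg _ _ hp₀.le,
      ← ENNReal.inv_rpow_mul_self (hUpos i).ne' (hUfin i).ne hp₀.ne']
    ring
  have hS_le : S ≤ K ^ p * D := by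
    simp only [S, D, hterm, ← ENNReal.tsum_mul_left, mul_left_comm (K ^ p)]
    exact ENNReal.tsum_le_tsum fun i =>
      mul_le_mul_right (iSup_rpow_mul_le_setLIntegral_rpow hw' (hK i) hp₀.le) _
  have hD_le : D ≤ S := by
    simp only [S, D, hterm]
    exact ENNReal.tsum_le_tsum fun i =>
      mul_le_mul_right (setLIntegral_rpow_le_iSup_rpow_mul _ _ hp₀.le) _
  have hD_le_F : D ≤ F := tsum_rpow_mul_setLIntegral_le hUmeas hw' hp a
  have hF_le : F ≤ (N : ℝ≥0∞) ^ (p - 1) * D := lintegral_rpow_tsum_le hN hUmeas hw' hp a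
  constructor
  · calc (K⁻¹ ⊓ 1) * S ^ (1/p) ≤ K⁻¹ * (K ^ p * F) ^ (1/p) :=
          mul_le_mul' inf_le_left (ENNReal.rpow_le_rpow (hS_le.trans (by gcongr)) (by positivity))
      _ = K⁻¹ * K * F ^ (1/p) := by
          rw [ENNReal.mul_rpow_of_nonneg _ _ (by positivity), one_div,
            ENNReal.rpow_rpow_inv hp₀.ne', mul_assoc]
      _ ≤ F ^ (1/p) := mul_le_of_le_one_left' (ENNReal.inv_mul_le_one K)
  · calc F ^ (1/p) ≤ ((N : ℝ≥0∞) ^ (p - 1) * S) ^ (1/p) :=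
          ENNReal.rpow_le_rpow (hF_le.trans (by gcongr)) (by positivity)
      _ = ((N : ℝ≥0∞) ^ (p - 1)) ^ (1/p) * S ^ (1/p) :=
          ENNReal.mul_rpow_of_nonneg _ _ (by positivity)
      _ ≤ _ := by gcongr; exact le_sup_left

/-- **Theorem 5.2(c), natural sequence space.** `(L^p_w)^♮ = ℓ^p_{d_p}` with equivalent
norms, where `d_p(i) = μ(U_i)^{1/p - 1} w̃(i)` and `w̃(i) = sup_{x ∈ U_i} w(x)`. -/
theorem stmt_3
    {X : Type*} [MeasurableSpace X] (μ : Measure X)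
    {I : Type*} [Countable I] (U : I → Set X)
    (hUmeas : ∀ i, MeasurableSet (U i))
    (hUpos : ∀ i, 0 < μ (U i)) (hUfin : ∀ i, μ (U i) < ∞)
    (hcov : ∀ x : X, ∃ i, x ∈ U i)
    (N : ℕ) (hN : ∀ x : X, {i : I | x ∈ U i}.encard ≤ N)
    (w : X → ℝ) (hw : ∀ x, 0 < w x) (hwm : Measurable w)
    (p : ℝ) (hp : 1 ≤ p)
    (Cm : ℝ) (hCm : ∀ i, ∀ x ∈ U i, ∀ y ∈ U i, max (w x / w y) (w y / w x) ≤ Cm) :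
    ∃ c C : ℝ≥0∞, 0 < c ∧ c ≤ C ∧ C < ∞ ∧ ∀ lam : I → ℂ,
      c * (∑' i, (‖lam i‖₊ : ℝ≥0∞) ^ p
            * (μ (U i) ^ (1/p - 1) * ⨆ x ∈ U i, ENNReal.ofReal (w x)) ^ p) ^ (1/p)
        ≤ (∫⁻ y, (∑' i, (‖lam i‖₊ : ℝ≥0∞) * (μ (U i))⁻¹
              * (U i).indicator (fun _ => (1 : ℝ≥0∞)) y) ^ p
            * ENNReal.ofReal (w y) ^ p ∂μ) ^ (1/p)
      ∧ (∫⁻ y, (∑' i, (‖lam i‖₊ : ℝ≥0∞) * (μ (U i))⁻¹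
              * (U i).indicator (fun _ => (1 : ℝ≥0∞)) y) ^ p
            * ENNReal.ofReal (w y) ^ p ∂μ) ^ (1/p)
        ≤ C * (∑' i, (‖lam i‖₊ : ℝ≥0∞) ^ p
            * (μ (U i) ^ (1/p - 1) * ⨆ x ∈ U i, ENNReal.ofReal (w x)) ^ p) ^ (1/p) :=
  stmt_3_general μ U hUmeas hUpos hUfin N hN w hw hwm p hp Cm hCm
end

section
/- Let 1 ≤ p < ∞ and let (U_i)_{i∈I} and (V_i)_{i∈I} be two families of measurable subsets of X over the same countable index set, each covering X, with 0 < μ(U_i), μ(V_i) < ∞, such that every x ∈ X lies in at most N of the sets U_i and in at most N' of the sets V_i. Suppose they are m_w-equivalent: there are constants C₁, C₂ > 0 with C₁ μ(U_i) ≤ μ(V_i) ≤ C₂ μ(U_i) for all i, and a constant C' with sup_{x∈U_i} sup_{y∈V_i} m_w(x,y) ≤ C' for all i, where m_w(x,y) = max(w(x)/w(y), w(y)/w(x)). Then there exist constants 0 < c ≤ C < ∞ such that for all complex sequences (λ_i)_{i∈I} (with both sides possibly infinite): c ‖Σ_{i∈I} |λ_i| χ_{V_i}‖_{L^p_w} ≤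 ‖Σ_{i∈I} |λ_i| χ_{U_i}‖_{L^p_w} ≤ C ‖Σ_{i∈I} |λ_i| χ_{V_i}‖_{L^p_w}. (Lemma 5.3 specialized to Y = L^p_w, flat spaces.) -/
/-!
Since every point lies in at most `N` of the sets `U i`, the `p`-th power of
`∑ |λ_i| χ_{U_i}` is comparable pointwise (up to `N ^ (p - 1)`) with `∑ |λ_i| ^ p χ_{U_i}`,
so `‖∑ |λ_i| χ_{U_i}‖_{L^p_w}^p` is comparable with `∑ |λ_i| ^ p ∫_{U_i} w ^ p`, and likewise
for `V`. On each pair `(U_i, V_i)` the weight `w ^ p` varies by at most the factor `C' ^ p`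
and the measures are comparable, so `∫_{U_i} w ^ p` and `∫_{V_i} w ^ p` agree up to constants.
-/

open MeasureTheory
open scoped ENNReal

theorem ENNReal.tsum_rpow_le_rpow_tsum_s7 {ι : Type*} (f : ι → ℝ≥0∞) {p : ℝ} (hp : 1 ≤ p) :
    ∑' i, f i ^ p ≤ (∑' i, f i) ^ p := by
  classical
  rw [ENNReal.tsum_eq_iSup_sum]
  refine iSup_le fun s => ?_
  calc ∑ i ∈ s, f i ^ p ≤ (∑ i ∈ s, f i) ^ p := by
        induction s using Finset.induction with
        | empty => simp [ENNReal.zero_rpow_of_pos (by linarith : (0 : ℝ) < p)]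
        | insert j s hj ih =>
          rw [Finset.sum_insert hj, Finset.sum_insert hj]
          exact (add_le_add_right ih _).trans (ENNReal.add_rpow_le_rpow_add _ _ hp)
    _ ≤ (∑' i, f i) ^ p := ENNReal.rpow_le_rpow (ENNReal.sum_le_tsum s) (by linarith)

theorem ENNReal.ofReal_rpow_le_of_div_le {u v C : ℝ} (hv : 0 < v) (h : u / v ≤ C)
    {p : ℝ} (hp : 0 ≤ p) :
    ENNReal.ofReal u ^ p ≤ ENNReal.ofReal C ^ p * ENNReal.ofReal v ^ p := by
  rw [← ENNReal.mul_rpow_of_nonneg _ _ hp, ← ENNReal.ofReal_mul' hv.le]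
  exact ENNReal.rpow_le_rpow (ENNReal.ofReal_le_ofReal ((div_le_iff₀ hv).1 h)) hp

theorem ENNReal.exists_rpow_le_mul_of_le_mul {ι : Type*} (A B : ι → ℝ≥0∞) {K L : ℝ≥0∞}
    (hK : K ≠ ∞) (hL : L ≠ ∞) (hAB : ∀ j, A j ≤ K * B j) (hBA : ∀ j, B j ≤ L * A j)
    {q : ℝ} (hq : 0 ≤ q) :
    ∃ c C : ℝ≥0∞, 0 < c ∧ c ≤ C ∧ C < ∞ ∧
      ∀ j, c * B j ^ q ≤ A j ^ q ∧ A j ^ q ≤ C * B j ^ q := by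
  set T := max (max K L) 1
  have hT₁ : 1 ≤ T ^ q := ENNReal.one_rpow q ▸ ENNReal.rpow_le_rpow (le_max_right _ _) hq
  have hT : T ^ q ≠ ∞ := ENNReal.rpow_ne_top_of_nonneg hq (by simp [T, hK, hL])
  have hT₀ : T ^ q ≠ 0 := (zero_lt_one.trans_le hT₁).ne'
  have pow_le {x y : ℝ≥0∞} {k : ℝ≥0∞} (hk : k ≤ T) (h : x ≤ k * y) : x ^ q ≤ T ^ q * y ^ q := by
    rw [← ENNReal.mul_rpow_of_nonneg _ _ hq]
    exact ENNReal.rpow_le_rpow (h.trans (mul_le_mul_left hk _)) hq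
  refine ⟨(T ^ q)⁻¹, T ^ q, ENNReal.inv_pos.2 hT, (ENNReal.inv_le_one.2 hT₁).trans hT₁,
    hT.lt_top, fun j => ⟨?_, pow_le (le_max_of_le_left (le_max_left _ _)) (hAB j)⟩⟩
  calc (T ^ q)⁻¹ * B j ^ q ≤ (T ^ q)⁻¹ * (T ^ q * A j ^ q) :=
        mul_le_mul_right (pow_le (le_max_of_le_left (le_max_right _ _)) (hBA j)) _
    _ = A j ^ q := by rw [← mul_assoc, ENNReal.inv_mul_cancel hT₀ hT, one_mul]

section BoundedOverlap

variable {ι X : Type*} {p : ℝ}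

theorem mul_indicator_one_rpow (a : ℝ≥0∞) (s : Set X) (y : X) (hp : 0 < p) :
    (a * s.indicator (fun _ => 1) y) ^ p = a ^ p * s.indicator (fun _ => 1) y := by
  by_cases hy : y ∈ s <;> simp [hy, ENNReal.zero_rpow_of_pos hp]

theorem tsum_rpow_mul_indicator_le_rpow_tsum (U : ι → Set X) (a : ι → ℝ≥0∞) (y : X)
    (hp : 1 ≤ p) :
    ∑' i, a i ^ p * (U i).indicator (fun _ => 1) y
      ≤ (∑' i, a i * (U i).indicator (fun _ => 1) y) ^ p := by
  simp only [← mul_indicator_one_rpow _ _ _ (by linarith : (0 : ℝ) < p)]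
  exact ENNReal.tsum_rpow_le_rpow_tsum_s7 _ hp

theorem rpow_tsum_mul_indicator_le {U : ι → Set X} {y : X} {M : ℕ}
    (hM : {i | y ∈ U i}.encard ≤ M) (a : ι → ℝ≥0∞) (hp : 1 ≤ p) :
    (∑' i, a i * (U i).indicator (fun _ => 1) y) ^ p
      ≤ (M : ℝ≥0∞) ^ (p - 1) * ∑' i, a i ^ p * (U i).indicator (fun _ => 1) y := by
  have hfin : {i | y ∈ U i}.Finite := Set.encard_ne_top_iff.1 (ne_top_of_le_ne_top (by simp) hM)
  have hcard : (hfin.toFinset.card : ℝ≥0∞) ≤ M := by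
    rw [hfin.encard_eq_coe_toFinset_card] at hM
    exact_mod_cast hM
  have vanish (b : ι → ℝ≥0∞) (i) (hi : i ∉ hfin.toFinset) :
      b i * (U i).indicator (fun _ => 1) y = 0 := by
    simp_all
  rw [tsum_eq_sum (vanish a), tsum_eq_sum (vanish (a · ^ p))]
  calc (∑ i ∈ hfin.toFinset, a i * (U i).indicator (fun _ => 1) y) ^ p
      ≤ (hfin.toFinset.card : ℝ≥0∞) ^ (p - 1) *
          ∑ i ∈ hfin.toFinset, (a i * (U i).indicator (fun _ => 1) y) ^ p :=
        ENNReal.rpow_sum_le_const_mul_sum_rpow _ _ hp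
    _ ≤ (M : ℝ≥0∞) ^ (p - 1) * ∑ i ∈ hfin.toFinset, a i ^ p * (U i).indicator (fun _ => 1) y := by
        simp only [mul_indicator_one_rpow _ _ _ (by linarith : (0 : ℝ) < p)]
        gcongr

variable [MeasurableSpace X] {μ : Measure X} {U : ι → Set X} {g : X → ℝ≥0∞}

theorem lintegral_tsum_mul_indicator_mul [Countable ι] (hU : ∀ i, MeasurableSet (U i))
    (hg : Measurable g) (b : ι → ℝ≥0∞) :
    ∫⁻ y, (∑' i, b i * (U i).indicator (fun _ => 1) y) * g y ∂μ
      = ∑' i, b i * ∫⁻ y in U i, g y ∂μ := by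
  have hpt (y : X) (i : ι) : b i * (U i).indicator (fun _ => 1) y * g y
      = b i * (U i).indicator g y := by
    by_cases hy : y ∈ U i <;> simp [hy]
  simp_rw [← ENNReal.tsum_mul_right, hpt]
  rw [lintegral_tsum fun i => ((hg.indicator (hU i)).const_mul _).aemeasurable]
  congr 1 with i
  rw [lintegral_const_mul _ (hg.indicator (hU i)), lintegral_indicator (hU i)]

theorem tsum_rpow_mul_setLIntegral_le_lintegral [Countable ι] (hU : ∀ i, MeasurableSet (U i))
    (hg : Measurable g) (a : ι → ℝ≥0∞) (hp : 1 ≤ p) :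
    ∑' i, a i ^ p * ∫⁻ y in U i, g y ∂μ
      ≤ ∫⁻ y, (∑' i, a i * (U i).indicator (fun _ => 1) y) ^ p * g y ∂μ := by
  rw [← lintegral_tsum_mul_indicator_mul hU hg]
  exact lintegral_mono fun y =>
    mul_le_mul_left (tsum_rpow_mul_indicator_le_rpow_tsum U a y hp) _

theorem lintegral_le_mul_tsum_rpow_mul_setLIntegral [Countable ι]
    (hU : ∀ i, MeasurableSet (U i)) {M : ℕ} (hM : ∀ y, {i | y ∈ U i}.encard ≤ M)
    (hg : Measurable g) (a : ι → ℝ≥0∞) (hp : 1 ≤ p) :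
    ∫⁻ y, (∑' i, a i * (U i).indicator (fun _ => 1) y) ^ p * g y ∂μ
      ≤ (M : ℝ≥0∞) ^ (p - 1) * ∑' i, a i ^ p * ∫⁻ y in U i, g y ∂μ := by
  have hmeas : Measurable fun y => (∑' i, a i ^ p * (U i).indicator (fun _ => 1) y) * g y :=
    (Measurable.tsum fun i => (measurable_const.indicator (hU i)).const_mul _).mul hg
  rw [← lintegral_tsum_mul_indicator_mul hU hg,
    ← lintegral_const_mul _ hmeas]
  refine lintegral_mono fun y => ?_
  rw [← mul_assoc]
  exact mul_le_mul_left (rpow_tsum_mul_indicator_le (hM y) a hp) _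

theorem lintegral_rpow_tsum_mul_indicator_le [Countable ι] {V : ι → Set X}
    (hU : ∀ i, MeasurableSet (U i)) (hV : ∀ i, MeasurableSet (V i)) {M : ℕ}
    (hM : ∀ y, {i | y ∈ U i}.encard ≤ M) (hg : Measurable g) {K : ℝ≥0∞}
    (hUV : ∀ i, ∫⁻ y in U i, g y ∂μ ≤ K * ∫⁻ y in V i, g y ∂μ) (a : ι → ℝ≥0∞) (hp : 1 ≤ p) :
    ∫⁻ y, (∑' i, a i * (U i).indicator (fun _ => 1) y) ^ p * g y ∂μ
      ≤ (M : ℝ≥0∞) ^ (p - 1) * K *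
          ∫⁻ y, (∑' i, a i * (V i).indicator (fun _ => 1) y) ^ p * g y ∂μ :=
  calc _ ≤ (M : ℝ≥0∞) ^ (p - 1) * ∑' i, a i ^ p * ∫⁻ y in U i, g y ∂μ :=
        lintegral_le_mul_tsum_rpow_mul_setLIntegral hU hM hg a hp
    _ ≤ (M : ℝ≥0∞) ^ (p - 1) * ∑' i, a i ^ p * (K * ∫⁻ y in V i, g y ∂μ) := by
        gcongr with i
        exact hUV i
    _ = (M : ℝ≥0∞) ^ (p - 1) * K * ∑' i, a i ^ p * ∫⁻ y in V i, g y ∂μ := by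
        rw [mul_assoc, ← ENNReal.tsum_mul_left (a := K)]
        exact congrArg _ (tsum_congr fun i => by ring)
    _ ≤ _ := mul_le_mul_right (tsum_rpow_mul_setLIntegral_le_lintegral hV hg a hp) _

end BoundedOverlap

theorem setLIntegral_le_mul_mul_setLIntegral {X : Type*} [MeasurableSpace X] {μ : Measure X}
    {S T : Set X} {g : X → ℝ≥0∞} (hg : Measurable g) {K R : ℝ≥0∞}
    (hK : ∀ x ∈ S, ∀ y ∈ T, g x ≤ K * g y) (hR : μ S ≤ R * μ T) :
    ∫⁻ x in S, g x ∂μ ≤ K * R * ∫⁻ y in T, g y ∂μ := by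
  set m := ⨆ x ∈ S, g x
  calc ∫⁻ x in S, g x ∂μ ≤ ∫⁻ _ in S, m ∂μ :=
        setLIntegral_mono measurable_const fun x hx => le_iSup₂ (f := fun x _ => g x) x hx
    _ = m * μ S := setLIntegral_const _ _
    _ ≤ m * (R * μ T) := by gcongr
    _ = R * ∫⁻ _ in T, m ∂μ := by rw [setLIntegral_const]; ring
    _ ≤ R * ∫⁻ y in T, K * g y ∂μ :=
        mul_le_mul_right (setLIntegral_mono (hg.const_mul K) fun y hy =>
          iSup₂_le fun x hx => hK x hx y hy) _
    _ = K * R * ∫⁻ y in T, g y ∂μ := by rw [lintegral_const_mul _ hg]; ring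

theorem stmt_7_general
    {X : Type*} [MeasurableSpace X] (μ : Measure X)
    {I : Type*} [Countable I] (U V : I → Set X)
    (hUmeas : ∀ i, MeasurableSet (U i)) (hVmeas : ∀ i, MeasurableSet (V i))
    (hVfin : ∀ i, μ (V i) < ∞)
    (N N' : ℕ)
    (hNU : ∀ x : X, {i : I | x ∈ U i}.encard ≤ N)
    (hNV : ∀ x : X, {i : I | x ∈ V i}.encard ≤ N')
    (w : X → ℝ) (hw : ∀ x, 0 < w x) (hwm : Measurable w)
    (p : ℝ) (hp : 1 ≤ p)
    (C₁ C₂ : ℝ≥0∞) (hC₁ : 0 < C₁) (hC₂ : C₂ < ∞)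
    (hμ₁ : ∀ i, C₁ * μ (U i) ≤ μ (V i)) (hμ₂ : ∀ i, μ (V i) ≤ C₂ * μ (U i))
    (C' : ℝ) (hC' : ∀ i, ∀ x ∈ U i, ∀ y ∈ V i, max (w x / w y) (w y / w x) ≤ C') :
    ∃ c C : ℝ≥0∞, 0 < c ∧ c ≤ C ∧ C < ∞ ∧ ∀ lam : I → ℂ,
      c * (∫⁻ y, (∑' i, (‖lam i‖₊ : ℝ≥0∞) * (V i).indicator (fun _ => (1 : ℝ≥0∞)) y) ^ p
            * ENNReal.ofReal (w y) ^ p ∂μ) ^ (1/p)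
        ≤ (∫⁻ y, (∑' i, (‖lam i‖₊ : ℝ≥0∞) * (U i).indicator (fun _ => (1 : ℝ≥0∞)) y) ^ p
            * ENNReal.ofReal (w y) ^ p ∂μ) ^ (1/p)
      ∧ (∫⁻ y, (∑' i, (‖lam i‖₊ : ℝ≥0∞) * (U i).indicator (fun _ => (1 : ℝ≥0∞)) y) ^ p
            * ENNReal.ofReal (w y) ^ p ∂μ) ^ (1/p)
        ≤ C * (∫⁻ y, (∑' i, (‖lam i‖₊ : ℝ≥0∞) * (V i).indicator (fun _ => (1 : ℝ≥0∞)) y) ^ p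
            * ENNReal.ofReal (w y) ^ p ∂μ) ^ (1/p) := by
  have hp₀ : 0 ≤ p := by linarith
  set g : X → ℝ≥0∞ := fun y => ENNReal.ofReal (w y) ^ p
  have hg : Measurable g := hwm.ennreal_ofReal.pow_const p
  set D := ENNReal.ofReal C' ^ p
  have hD : D ≠ ∞ := ENNReal.rpow_ne_top_of_nonneg hp₀ ENNReal.ofReal_ne_top
  have hUV (i) : ∫⁻ x in U i, g x ∂μ ≤ D * C₁⁻¹ * ∫⁻ y in V i, g y ∂μ := by
    refine setLIntegral_le_mul_mul_setLIntegral hg (fun x hx y hy =>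
      ENNReal.ofReal_rpow_le_of_div_le (hw y) ((le_max_left _ _).trans (hC' i x hx y hy)) hp₀) ?_
    rw [mul_comm, ← div_eq_mul_inv, ENNReal.le_div_iff_mul_le (.inl hC₁.ne') (.inr (hVfin i).ne),
      mul_comm]
    exact hμ₁ i
  have hVU (i) : ∫⁻ y in V i, g y ∂μ ≤ D * C₂ * ∫⁻ x in U i, g x ∂μ :=
    setLIntegral_le_mul_mul_setLIntegral hg (fun y hy x hx =>
      ENNReal.ofReal_rpow_le_of_div_le (hw x) ((le_max_right _ _).trans (hC' i x hx y hy)) hp₀)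
      (hμ₂ i)
  exact ENNReal.exists_rpow_le_mul_of_le_mul _ _
    (by finiteness) (by finiteness)
    (fun lam => lintegral_rpow_tsum_mul_indicator_le hUmeas hVmeas hNU hg hUV _ hp)
    (fun lam => lintegral_rpow_tsum_mul_indicator_le hVmeas hUmeas hNV hg hVU _ hp)
    (by positivity)

/-- **Lemma 5.3 specialized to `Y = L^p_w` (flat spaces).** If the coverings
`(U_i)` and `(V_i)` are `m_w`-equivalent then `Y^♭(𝒰) = Y^♭(𝒱)` with
equivalent norms. -/
theorem stmt_7
    {X : Type*} [MeasurableSpace X] (μ : Measure X)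
    {I : Type*} [Countable I] (U V : I → Set X)
    (hUmeas : ∀ i, MeasurableSet (U i)) (hVmeas : ∀ i, MeasurableSet (V i))
    (hUpos : ∀ i, 0 < μ (U i)) (hUfin : ∀ i, μ (U i) < ∞)
    (hVpos : ∀ i, 0 < μ (V i)) (hVfin : ∀ i, μ (V i) < ∞)
    (hcovU : ∀ x : X, ∃ i, x ∈ U i) (hcovV : ∀ x : X, ∃ i, x ∈ V i)
    (N N' : ℕ)
    (hNU : ∀ x : X, {i : I | x ∈ U i}.encard ≤ N)
    (hNV : ∀ x : X, {i : I | x ∈ V i}.encard ≤ N')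
    (w : X → ℝ) (hw : ∀ x, 0 < w x) (hwm : Measurable w)
    (p : ℝ) (hp : 1 ≤ p)
    (C₁ C₂ : ℝ≥0∞) (hC₁ : 0 < C₁) (hC₂ : C₂ < ∞)
    (hμ₁ : ∀ i, C₁ * μ (U i) ≤ μ (V i)) (hμ₂ : ∀ i, μ (V i) ≤ C₂ * μ (U i))
    (C' : ℝ) (hC' : ∀ i, ∀ x ∈ U i, ∀ y ∈ V i, max (w x / w y) (w y / w x) ≤ C') :
    ∃ c C : ℝ≥0∞, 0 < c ∧ c ≤ C ∧ C < ∞ ∧ ∀ lam : I → ℂ,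
      c * (∫⁻ y, (∑' i, (‖lam i‖₊ : ℝ≥0∞) * (V i).indicator (fun _ => (1 : ℝ≥0∞)) y) ^ p
            * ENNReal.ofReal (w y) ^ p ∂μ) ^ (1/p)
        ≤ (∫⁻ y, (∑' i, (‖lam i‖₊ : ℝ≥0∞) * (U i).indicator (fun _ => (1 : ℝ≥0∞)) y) ^ p
            * ENNReal.ofReal (w y) ^ p ∂μ) ^ (1/p)
      ∧ (∫⁻ y, (∑' i, (‖lam i‖₊ : ℝ≥0∞) * (U i).indicator (fun _ => (1 : ℝ≥0∞)) y) ^ p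
            * ENNReal.ofReal (w y) ^ p ∂μ) ^ (1/p)
        ≤ C * (∫⁻ y, (∑' i, (‖lam i‖₊ : ℝ≥0∞) * (V i).indicator (fun _ => (1 : ℝ≥0∞)) y) ^ p
            * ENNReal.ofReal (w y) ^ p ∂μ) ^ (1/p) :=
  stmt_7_general μ U V hUmeas hVmeas hVfin N N' hNU hNV w hw hwm p hp C₁ C₂ hC₁ hC₂ hμ₁ hμ₂ C' hC'
end

section
/- Suppose the covering is moderate with constant C̃ (μ(U_i) ≤ C̃ μ(U_j) whenever U_i ∩ U_j ≠ ∅) and that sup_{x,y∈U_i} m(x,y) ≤ C_m for all i. Let π : I → I be a bijection such that U_{π(i)} ∩ U_i ≠ ∅ for all i ∈ I, and define K_π(x,y) = Σ_{i∈I} μ(U_{π^{-1}(i)})^{-1} χ_{U_{π^{-1}(i)}}(x) χ_{U_i}(y). Then: (1) for all y ∈ X, ∫_X K_π(x,y) m(x,y) dμ(x) ≤ C_m² N; and (2) for all x ∈ X, ∫_X K_π(x,y) m(x,y) dμ(y) ≤ C_m² C̃ N. (Kernel estimates from the proof of Lemma 5.4.) -/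
open MeasureTheory
open scoped ENNReal NNReal

/-!
A summand of `K_π(·, y)` is the normalized indicator of `U_{π⁻¹(i)}`, switched on only when
`y ∈ U_i`. Since `U_{π⁻¹(i)}` and `U_i` meet, the triangle inequality for `m` through a common
point bounds `m(x, y)` by `C_m²` on the support of each summand, so each summand integrates in
`x` to at most `C_m²`, and at most `N` summands are switched on. In `y` a summand integrates to
at most `C_m² μ(U_i) / μ(U_{π⁻¹(i)}) ≤ C_m² C̃`, and at most `N` of the sets `U_{π⁻¹(i)}`
contain `x`.
-/

theorem ENNReal.inv_mul_le_of_le_mul {a b c : ℝ≥0∞} (h : b ≤ c * a) : a⁻¹ * b ≤ c :=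
  calc a⁻¹ * b ≤ a⁻¹ * (c * a) := by gcongr
    _ = c * (a⁻¹ * a) := by ring
    _ ≤ c := mul_le_of_le_one_right' (ENNReal.inv_mul_le_one a)

theorem ofReal_le_sq_of_submultiplicative {X : Type*} {m : X → X → ℝ} (hm0 : ∀ x y, 0 ≤ m x y)
    (hmsub : ∀ x y z, m x y ≤ m x z * m z y) {C : ℝ} {x y z : X}
    (hxz : m x z ≤ C) (hzy : m z y ≤ C) : ENNReal.ofReal (m x y) ≤ ENNReal.ofReal C ^ 2 := by
  have hC : 0 ≤ C := (hm0 x z).trans hxz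
  calc ENNReal.ofReal (m x y) ≤ ENNReal.ofReal (C * C) :=
        ENNReal.ofReal_le_ofReal <| (hmsub x y z).trans <| mul_le_mul hxz hzy (hm0 z y) hC
    _ = ENNReal.ofReal C ^ 2 := by rw [ENNReal.ofReal_mul hC, sq]

theorem tsum_indicator_one_eq_encard {X I : Type*} (U : I → Set X) (x : X) :
    ∑' i, (U i).indicator (fun _ => (1 : ℝ≥0∞)) x = {i | x ∈ U i}.encard := by
  rw [← ENNReal.tsum_set_one, tsum_subtype {i | x ∈ U i} fun _ => 1]
  exact tsum_congr fun i => by by_cases h : x ∈ U i <;> simp [h]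

theorem lintegral_tsum_indicator_mul_le {X I : Type*} [MeasurableSpace X] [Countable I]
    (μ : Measure X) (a : I → ℝ≥0∞) {A : I → Set X} (hA : ∀ i, MeasurableSet (A i))
    {g : X → ℝ≥0∞} {c : ℝ≥0∞} (hg : ∀ i, a i ≠ 0 → ∀ x ∈ A i, g x ≤ c) :
    ∫⁻ x, (∑' i, a i * (A i).indicator (fun _ => 1) x) * g x ∂μ
      ≤ c * ∑' i, a i * μ (A i) := by
  have hterm : ∀ i x, a i * (A i).indicator (fun _ => 1) x * g x
      ≤ c * (a i * (A i).indicator (fun _ => 1) x) := by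
    intro i x
    by_cases ha : a i = 0
    · simp [ha]
    by_cases hx : x ∈ A i
    · simpa [hx, mul_comm] using mul_le_mul_right (hg i ha x hx) (a i)
    · simp [hx]
  calc ∫⁻ x, (∑' i, a i * (A i).indicator (fun _ => 1) x) * g x ∂μ
      ≤ ∫⁻ x, ∑' i, c * (a i * (A i).indicator (fun _ => 1) x) ∂μ :=
        lintegral_mono fun x => by
          rw [← ENNReal.tsum_mul_right]
          exact ENNReal.tsum_le_tsum fun i => hterm i x
    _ = ∑' i, c * (a i * μ (A i)) := by
        rw [lintegral_tsum fun i =>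
          (((measurable_const.indicator (hA i)).const_mul _).const_mul _).aemeasurable]
        refine tsum_congr fun i => ?_
        rw [lintegral_const_mul _ ((measurable_const.indicator (hA i)).const_mul _),
          lintegral_const_mul _ (measurable_const.indicator (hA i)),
          lintegral_indicator_const (hA i), one_mul]
    _ = c * ∑' i, a i * μ (A i) := ENNReal.tsum_mul_left

section SwitchKernel

variable {X I : Type*} [MeasurableSpace X] [Countable I] (μ : Measure X) {U : I → Set X}
  (π : I ≃ I)

variable (U) in
/-- The kernel `K_π`. -/
noncomputable def switchKernel (x y : X) : ℝ≥0∞ :=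
  ∑' i, (μ (U (π.symm i)))⁻¹ * (U (π.symm i)).indicator (fun _ => 1) x
    * (U i).indicator (fun _ => 1) y

theorem lintegral_switchKernel_mul_le_left (hU : ∀ i, MeasurableSet (U i)) {N : ℝ≥0∞}
    (hN : ∀ x, ({i | x ∈ U i}.encard : ℝ≥0∞) ≤ N) {g : X → X → ℝ≥0∞} {c : ℝ≥0∞}
    (hg : ∀ i, ∀ x ∈ U (π.symm i), ∀ y ∈ U i, g x y ≤ c) (y : X) :
    ∫⁻ x, switchKernel μ U π x y * g x y ∂μ ≤ c * N := by
  simp_rw [switchKernel, mul_right_comm _ ((U (π.symm _)).indicator _ _)]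
  calc _ ≤ c * ∑' i, (μ (U (π.symm i)))⁻¹ * (U i).indicator (fun _ => 1) y * μ (U (π.symm i)) :=
        lintegral_tsum_indicator_mul_le μ _ (fun i => hU _) fun i hi x hx =>
          hg i x hx y (Set.mem_of_indicator_ne_zero (right_ne_zero_of_mul hi))
    _ ≤ c * ∑' i, (U i).indicator (fun _ => 1) y := by
        refine mul_le_mul_right (ENNReal.tsum_le_tsum fun i => ?_) _
        rw [mul_right_comm]
        exact mul_le_of_le_one_left' (ENNReal.inv_mul_le_one _)
    _ ≤ c * N := by rw [tsum_indicator_one_eq_encard]; gcongr; exact hN y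

theorem lintegral_switchKernel_mul_le_right (hU : ∀ i, MeasurableSet (U i)) {N : ℝ≥0∞}
    (hN : ∀ x, ({i | x ∈ U i}.encard : ℝ≥0∞) ≤ N) {C : ℝ≥0∞}
    (hmod : ∀ i, μ (U i) ≤ C * μ (U (π.symm i))) {g : X → X → ℝ≥0∞} {c : ℝ≥0∞}
    (hg : ∀ i, ∀ x ∈ U (π.symm i), ∀ y ∈ U i, g x y ≤ c) (x : X) :
    ∫⁻ y, switchKernel μ U π x y * g x y ∂μ ≤ c * C * N := by
  calc _ ≤ c * ∑' i, (μ (U (π.symm i)))⁻¹ * (U (π.symm i)).indicator (fun _ => 1) x * μ (U i) :=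
        lintegral_tsum_indicator_mul_le μ _ hU fun i hi y hy =>
          hg i x (Set.mem_of_indicator_ne_zero (right_ne_zero_of_mul hi)) y hy
    _ ≤ c * ∑' i, C * (U (π.symm i)).indicator (fun _ => 1) x := by
        refine mul_le_mul_right (ENNReal.tsum_le_tsum fun i => ?_) _
        rw [mul_right_comm]
        exact mul_le_mul_left (ENNReal.inv_mul_le_of_le_mul (hmod i)) _
    _ = c * C * ∑' i, (U i).indicator (fun _ => 1) x := by
        rw [ENNReal.tsum_mul_left, mul_assoc,
          π.symm.tsum_eq fun i => (U i).indicator (fun _ => (1 : ℝ≥0∞)) x]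
    _ ≤ c * C * N := by rw [tsum_indicator_one_eq_encard]; gcongr; exact hN x

end SwitchKernel

theorem stmt_8_general
    {X : Type*} [MeasurableSpace X] (μ : Measure X)
    {I : Type*} [Countable I] (U : I → Set X)
    (hUmeas : ∀ i, MeasurableSet (U i))
    (N : ℕ) (hN : ∀ x : X, {i : I | x ∈ U i}.encard ≤ N)
    (m : X → X → ℝ) (hm1 : ∀ x y, 1 ≤ m x y)
    (hmsub : ∀ x y z, m x y ≤ m x z * m z y)
    (Ct : ℝ≥0∞) (hmod : ∀ i j, (U i ∩ U j).Nonempty → μ (U i) ≤ Ct * μ (U j))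
    (Cm : ℝ) (hCm : ∀ i, ∀ x ∈ U i, ∀ y ∈ U i, m x y ≤ Cm)
    (π : I ≃ I) (hπ : ∀ i, (U (π i) ∩ U i).Nonempty) :
    (∀ y : X,
      ∫⁻ x, (∑' i, (μ (U (π.symm i)))⁻¹ * (U (π.symm i)).indicator (fun _ => (1 : ℝ≥0∞)) x
          * (U i).indicator (fun _ => (1 : ℝ≥0∞)) y)
          * ENNReal.ofReal (m x y) ∂μ
        ≤ ENNReal.ofReal Cm ^ 2 * N)
    ∧
    (∀ x : X,
      ∫⁻ y, (∑' i, (μ (U (π.symm i)))⁻¹ * (U (π.symm i)).indicator (fun _ => (1 : ℝ≥0∞)) x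
          * (U i).indicator (fun _ => (1 : ℝ≥0∞)) y)
          * ENNReal.ofReal (m x y) ∂μ
        ≤ ENNReal.ofReal Cm ^ 2 * Ct * N) := by
  have hπ' : ∀ i, (U i ∩ U (π.symm i)).Nonempty := fun i => by simpa using hπ (π.symm i)
  have hm : ∀ i, ∀ x ∈ U (π.symm i), ∀ y ∈ U i, ENNReal.ofReal (m x y) ≤ ENNReal.ofReal Cm ^ 2 :=
    fun i x hx y hy =>
      let ⟨z, hzi, hzj⟩ := hπ' i
      ofReal_le_sq_of_submultiplicative (fun x y => zero_le_one.trans (hm1 x y)) hmsub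
        (hCm _ x hx z hzj) (hCm i z hzi y hy)
  have hN' : ∀ x, ({i | x ∈ U i}.encard : ℝ≥0∞) ≤ N := fun x => by exact_mod_cast hN x
  exact ⟨lintegral_switchKernel_mul_le_left μ π hUmeas hN' hm,
    lintegral_switchKernel_mul_le_right μ π hUmeas hN' (fun i => hmod i _ (hπ' i)) hm⟩

/-- **Kernel estimates from the proof of Lemma 5.4.** For a bijection `π` with
`U_{π(i)} ∩ U_i ≠ ∅` and the kernel
`K_π(x,y) = Σ_i μ(U_{π⁻¹(i)})⁻¹ χ_{U_{π⁻¹(i)}}(x) χ_{U_i}(y)` one has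
`∫_X K_π(x,y) m(x,y) dμ(x) ≤ C_m² N` and `∫_X K_π(x,y) m(x,y) dμ(y) ≤ C_m² C̃ N`. -/
theorem stmt_8
    {X : Type*} [MeasurableSpace X] (μ : Measure X)
    {I : Type*} [Countable I] (U : I → Set X)
    (hUmeas : ∀ i, MeasurableSet (U i))
    (hUpos : ∀ i, 0 < μ (U i)) (hUfin : ∀ i, μ (U i) < ∞)
    (hcov : ∀ x : X, ∃ i, x ∈ U i)
    (N : ℕ) (hN : ∀ x : X, {i : I | x ∈ U i}.encard ≤ N)
    (m : X → X → ℝ) (hm1 : ∀ x y, 1 ≤ m x y) (hmsymm : ∀ x y, m x y = m y x)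
    (hmsub : ∀ x y z, m x y ≤ m x z * m z y) (hmmeas : Measurable (Function.uncurry m))
    (Ct : ℝ≥0∞) (hmod : ∀ i j, (U i ∩ U j).Nonempty → μ (U i) ≤ Ct * μ (U j))
    (Cm : ℝ) (hCm : ∀ i, ∀ x ∈ U i, ∀ y ∈ U i, m x y ≤ Cm)
    (π : I ≃ I) (hπ : ∀ i, (U (π i) ∩ U i).Nonempty) :
    (∀ y : X,
      ∫⁻ x, (∑' i, (μ (U (π.symm i)))⁻¹ * (U (π.symm i)).indicator (fun _ => (1 : ℝ≥0∞)) x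
          * (U i).indicator (fun _ => (1 : ℝ≥0∞)) y)
          * ENNReal.ofReal (m x y) ∂μ
        ≤ ENNReal.ofReal Cm ^ 2 * N)
    ∧
    (∀ x : X,
      ∫⁻ y, (∑' i, (μ (U (π.symm i)))⁻¹ * (U (π.symm i)).indicator (fun _ => (1 : ℝ≥0∞)) x
          * (U i).indicator (fun _ => (1 : ℝ≥0∞)) y)
          * ENNReal.ofReal (m x y) ∂μ
        ≤ ENNReal.ofReal Cm ^ 2 * Ct * N) :=
  stmt_8_general μ U hUmeas N hN m hm1 hmsub Ct hmod Cm hCm π hπ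
end

section
/- Suppose the covering is moderate with constant C̃ (μ(U_i) ≤ C̃ μ(U_j) whenever U_i ∩ U_j ≠ ∅) and that sup_{x,y∈U_i} m(x,y) ≤ C_m for all i. Fix z ∈ X, set v(x) = m(x,z), and choose points x_i ∈ U_i for all i ∈ I. Suppose there is a constant A such that ∫_X (osc(x,y) + |R(x,y)|) m(x,y) dμ(y) ≤ A for all x ∈ X. Then there exists a constant C', depending only on N, C̃ and C_m, such that for every x ∈ X the series Σ_{i∈I} |R(x,x_i)| v(x_i) μ(U_i) converges with Σ_{i∈I} |R(x,x_i)| v(x_i) μ(U_i) ≤ C' A v(x). (Pointwise absolute convergence claim of Lemma 5.10.) -/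
open MeasureTheory
open scoped ENNReal NNReal

/-- The oscillation kernel `osc_{𝒰,Γ}(x,y) = sup_{z ∈ Q_y} |R(x,y) − Γ(y,z) R(x,z)|`,
where `Q_y = ⋃_{i : y ∈ U_i} U_i`. -/
noncomputable def osc {X I : Type*} (U : I → Set X) (R Γ : X → X → ℂ) (x y : X) : ℝ≥0∞ :=
  ⨆ z ∈ ⋃ i ∈ {i : I | y ∈ U i}, U i, (‖R x y - Γ y z * R x z‖₊ : ℝ≥0∞)

/-!
Fix `x` and let `f(y) = (osc(x,y) + |R(x,y)|) m(x,y)`. For `y ∈ U_i` the point `x_i` lies in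
`Q_y`, so `|R(x,x_i)| = |Γ(y,x_i) R(x,x_i)| ≤ osc(x,y) + |R(x,y)|`, while submultiplicativity and
symmetry give `m(x_i,z) ≤ m(x_i,y) m(y,x) m(x,z) ≤ C_m m(x,y) v(x)`. Hence the `i`-th term is at
most `C_m v(x) ∫_{U_i} f`, and since every point lies in at most `N` of the `U_i`, summing over `i`
costs a factor `N`: the series is bounded by `N C_m A v(x)`.
-/

theorem tsum_mul_measure_le_of_encard_le {X ι : Type*} [MeasurableSpace X] (μ : Measure X)
    {U : ι → Set X} (hU : ∀ i, MeasurableSet (U i)) {N : ℕ}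
    (hN : ∀ x, {i | x ∈ U i}.encard ≤ N) {c : ι → ℝ≥0∞} {g : X → ℝ≥0∞}
    (hcg : ∀ i, ∀ y ∈ U i, c i ≤ g y) :
    ∑' i, c i * μ (U i) ≤ N * ∫⁻ y, g y ∂μ :=
  calc ∑' i, c i * μ (U i) = ∑' i, ∫⁻ _ in U i, c i ∂μ := by simp only [setLIntegral_const]
    _ ≤ ∑' i, ∫⁻ y in U i, g y ∂μ :=
      ENNReal.tsum_le_tsum fun i => setLIntegral_mono' (hU i) (hcg i)
    _ = ∫⁻ y, g y ∂(Measure.sum fun i => μ.restrict (U i)) := (lintegral_sum_measure _ _).symm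
    _ ≤ ∫⁻ y, g y ∂(N • μ.restrict (⋃ i, U i)) :=
      lintegral_mono' (Measure.sum_restrict_le hU hN) le_rfl
    _ ≤ N * ∫⁻ y, g y ∂μ := by
      rw [lintegral_smul_measure, nsmul_eq_mul]
      gcongr
      exact Measure.restrict_le_self

theorem nnnorm_le_osc_add_nnnorm {X I : Type*} {U : I → Set X} {R Γ : X → X → ℂ} {x y w : X}
    {i : I} (hΓ : ‖Γ y w‖ = 1) (hy : y ∈ U i) (hw : w ∈ U i) :
    (‖R x w‖₊ : ℝ≥0∞) ≤ osc U R Γ x y + ‖R x y‖₊ := by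
  have hosc : (‖R x y - Γ y w * R x w‖₊ : ℝ≥0∞) ≤ osc U R Γ x y :=
    le_iSup₂_of_le w (Set.mem_biUnion (show i ∈ {j | y ∈ U j} from hy) hw) le_rfl
  have hΓnn : ‖Γ y w‖₊ = 1 := NNReal.coe_eq_one.mp hΓ
  have hnorm : ‖R x w‖₊ ≤ ‖R x y - Γ y w * R x w‖₊ + ‖R x y‖₊ :=
    calc ‖R x w‖₊ = ‖R x y - (R x y - Γ y w * R x w)‖₊ := by
          rw [sub_sub_cancel, nnnorm_mul, hΓnn, one_mul]
      _ ≤ ‖R x y‖₊ + ‖R x y - Γ y w * R x w‖₊ := nnnorm_sub_le _ _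
      _ = _ := add_comm _ _
  calc (‖R x w‖₊ : ℝ≥0∞) ≤ ‖R x y - Γ y w * R x w‖₊ + ‖R x y‖₊ := mod_cast hnorm
    _ ≤ osc U R Γ x y + ‖R x y‖₊ := by gcongr

section Weight

variable {X : Type*} {m : X → X → ℝ}

theorem weight_le_mul_mul (hm0 : ∀ x y, 0 ≤ m x y) (hmsymm : ∀ x y, m x y = m y x)
    (hmsub : ∀ x y z, m x y ≤ m x z * m z y) (w x y z : X) :
    m w z ≤ m w y * (m x y * m x z) :=
  calc m w z ≤ m w y * m y z := hmsub w z y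
    _ ≤ m w y * (m y x * m x z) := mul_le_mul_of_nonneg_left (hmsub y z x) (hm0 w y)
    _ = m w y * (m x y * m x z) := by rw [hmsymm y x]

theorem nnnorm_mul_weight_le_of_mem {I : Type*} {U : I → Set X} {R Γ : X → X → ℂ}
    (hm0 : ∀ x y, 0 ≤ m x y) (hmsymm : ∀ x y, m x y = m y x)
    (hmsub : ∀ x y z, m x y ≤ m x z * m z y) {C : ℝ} {i : I} {w y : X} (hΓ : ‖Γ y w‖ = 1)
    (hw : w ∈ U i) (hy : y ∈ U i) (hwy : m w y ≤ C) (x z : X) :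
    (‖R x w‖₊ : ℝ≥0∞) * ENNReal.ofReal (m w z)
      ≤ ENNReal.ofReal (C * m x z) *
        ((osc U R Γ x y + ‖R x y‖₊) * ENNReal.ofReal (m x y)) := by
  have hC : 0 ≤ C := (hm0 w y).trans hwy
  calc (‖R x w‖₊ : ℝ≥0∞) * ENNReal.ofReal (m w z)
      ≤ (osc U R Γ x y + ‖R x y‖₊) * ENNReal.ofReal (C * (m x y * m x z)) := by
        gcongr
        · exact nnnorm_le_osc_add_nnnorm hΓ hy hw
        · exact (weight_le_mul_mul hm0 hmsymm hmsub w x y z).trans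
            (mul_le_mul_of_nonneg_right hwy (mul_nonneg (hm0 x y) (hm0 x z)))
    _ = _ := by
        rw [ENNReal.ofReal_mul hC, ENNReal.ofReal_mul hC, ENNReal.ofReal_mul (hm0 x y)]
        ring

end Weight

theorem stmt_13_general
    {X : Type*} [MeasurableSpace X] (μ : Measure X)
    {I : Type*} (U : I → Set X)
    (hUmeas : ∀ i, MeasurableSet (U i))
    (N : ℕ) (hN : ∀ x : X, {i : I | x ∈ U i}.encard ≤ N)
    (m : X → X → ℝ) (hm1 : ∀ x y, 1 ≤ m x y) (hmsymm : ∀ x y, m x y = m y x)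
    (hmsub : ∀ x y z, m x y ≤ m x z * m z y)
    (Cm : ℝ) (hCm : ∀ i, ∀ x ∈ U i, ∀ y ∈ U i, m x y ≤ Cm)
    (z : X) (xi : I → X) (hxi : ∀ i, xi i ∈ U i)
    (R Γ : X → X → ℂ)
    (hΓ : ∀ x y, ‖Γ x y‖ = 1)
    (A : ℝ)
    (hA : ∀ x, ∫⁻ y, (osc U R Γ x y + (‖R x y‖₊ : ℝ≥0∞)) * ENNReal.ofReal (m x y) ∂μ
      ≤ ENNReal.ofReal A) :
    ∃ C' : ℝ, 0 < C' ∧ ∀ x : X,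
      ∑' i, (‖R x (xi i)‖₊ : ℝ≥0∞) * ENNReal.ofReal (m (xi i) z) * μ (U i)
        ≤ ENNReal.ofReal (C' * A * m x z) := by
  have hm0 : ∀ x y, 0 ≤ m x y := fun x y => zero_le_one.trans (hm1 x y)
  set Cm' := max Cm 1
  refine ⟨(N + 1) * Cm', by positivity, fun x => ?_⟩
  have hCm' : 0 ≤ Cm' * m x z := mul_nonneg (by positivity) (hm0 x z)
  have hsum := tsum_mul_measure_le_of_encard_le μ hUmeas hN fun i y hy =>
    nnnorm_mul_weight_le_of_mem (R := R) hm0 hmsymm hmsub (hΓ y (xi i)) (hxi i) hy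
      ((hCm i _ (hxi i) y hy).trans (le_max_left Cm 1)) x z
  rw [lintegral_const_mul' _ _ ENNReal.ofReal_ne_top] at hsum
  refine hsum.trans ?_
  calc (N : ℝ≥0∞) * (ENNReal.ofReal (Cm' * m x z) * ∫⁻ y, (osc U R Γ x y + ‖R x y‖₊) *
        ENNReal.ofReal (m x y) ∂μ)
      ≤ N * (ENNReal.ofReal (Cm' * m x z) * ENNReal.ofReal A) := by gcongr; exact hA x
    _ = ENNReal.ofReal (N * (Cm' * m x z * A)) := by
        rw [← ENNReal.ofReal_mul hCm', ← ENNReal.ofReal_natCast,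
          ← ENNReal.ofReal_mul (Nat.cast_nonneg N)]
    _ ≤ ENNReal.ofReal ((N + 1) * Cm' * A * m x z) := by
        rcases le_or_gt A 0 with hA0 | hA0
        · exact ENNReal.ofReal_le_ofReal_iff'.mpr
            (Or.inr (mul_nonpos_of_nonneg_of_nonpos (Nat.cast_nonneg N)
              (mul_nonpos_of_nonneg_of_nonpos hCm' hA0)))
        · gcongr ENNReal.ofReal ?_
          nlinarith [mul_nonneg hCm' hA0.le]

/-- **Pointwise absolute convergence claim of Lemma 5.10.** With `v(x) = m(x,z)` and
points `x_i ∈ U_i`, the series `Σ_i |R(x,x_i)| v(x_i) μ(U_i)` converges for every `x`,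
with `Σ_i |R(x,x_i)| v(x_i) μ(U_i) ≤ C' A v(x)`. -/
theorem stmt_13
    {X : Type*} [MeasurableSpace X] (μ : Measure X)
    {I : Type*} [Countable I] (U : I → Set X)
    (hUmeas : ∀ i, MeasurableSet (U i))
    (hUpos : ∀ i, 0 < μ (U i)) (hUfin : ∀ i, μ (U i) < ∞)
    (hcov : ∀ x : X, ∃ i, x ∈ U i)
    (N : ℕ) (hN : ∀ x : X, {i : I | x ∈ U i}.encard ≤ N)
    (m : X → X → ℝ) (hm1 : ∀ x y, 1 ≤ m x y) (hmsymm : ∀ x y, m x y = m y x)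
    (hmsub : ∀ x y z, m x y ≤ m x z * m z y) (hmmeas : Measurable (Function.uncurry m))
    (Ct : ℝ≥0∞) (hmod : ∀ i j, (U i ∩ U j).Nonempty → μ (U i) ≤ Ct * μ (U j))
    (Cm : ℝ) (hCm : ∀ i, ∀ x ∈ U i, ∀ y ∈ U i, m x y ≤ Cm)
    (z : X) (xi : I → X) (hxi : ∀ i, xi i ∈ U i)
    (R Γ : X → X → ℂ) (hRmeas : Measurable (Function.uncurry R))
    (hΓ : ∀ x y, ‖Γ x y‖ = 1)
    (A : ℝ)
    (hA : ∀ x, ∫⁻ y, (osc U R Γ x y + (‖R x y‖₊ : ℝ≥0∞)) * ENNReal.ofReal (m x y) ∂μ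
      ≤ ENNReal.ofReal A) :
    ∃ C' : ℝ, 0 < C' ∧ ∀ x : X,
      ∑' i, (‖R x (xi i)‖₊ : ℝ≥0∞) * ENNReal.ofReal (m (xi i) z) * μ (U i)
        ≤ ENNReal.ofReal (C' * A * m x z) :=
  stmt_13_general μ U hUmeas N hN m hm1 hmsymm hmsub Cm hCm z xi hxi R Γ hΓ A hA
end

section
/- Let 1 ≤ p < ∞, let m be an admissible weight with m(x,y) ≥ max(w(x)/w(y), w(y)/w(x)) and sup_{x,y∈U_i} m(x,y) ≤ C_m for all i, and suppose the covering is moderate with constant C̃ (μ(U_i) ≤ C̃ μ(U_j) whenever U_i ∩ U_j ≠ ∅). Choose points x_i ∈ U_i and suppose there is a constant A such that ∫_X (osc(x,y) + |R(x,y)|) m(x,y) dμ(y) ≤ A for all x and ∫_X (osc(x,y) + |R(x,y)|) m(x,y) dμ(x) ≤ A for all y. Then there exists a constant C, depending only on N, C̃, C_m and p, such that for every complex sequence (λ_i)_{i∈I}: ‖ Σ_{i∈I} |λ_i| |R(·, x_i)| ‖_{L^p_w} ≤ C A (Σ_{i∈I} |λ_i|^p d_p(i)^p)^{1/p}, where d_p(i)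 = μ(U_i)^{1/p − 1} w̃(i) and w̃(i) = sup_{x∈U_i} w(x) (both sides possibly infinite). (Norm estimate (5.9) of Lemma 5.10 specialized to Y = L^p_w.) -/
/-!
For `y ∈ U_i` the weight condition gives `|R(x, x_i)| w(x) ≤ K(x, y) w(y)`, where
`K(x, y) = sup_{i : y ∈ U_i} |R(x, x_i)| m(x, y) ≤ (osc + |R|)(x, y) m(x, y)`. Averaging this over
`U_i` bounds `Σ_i |λ_i| |R(x, x_i)| w(x)` by `∫ K(x, y) g(y) dμ(y)` with
`g = w Σ_i 1_{U_i} |λ_i| / μ(U_i)`. Schur's test bounds the `L^p`-norm of this integral by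
`A ‖g‖_p`, and the finite overlap of the covering gives
`‖g‖_p^p ≤ N^{p-1} Σ_i |λ_i|^p μ(U_i)^{1-p} w̃(i)^p`.
-/

open MeasureTheory
open scoped ENNReal NNReal

open ENNReal

namespace ENNReal

lemma rpow_one_div_le_mul_of_le {a b c : ℝ≥0∞} {p : ℝ} (hp : 0 < p) (h : a ≤ b ^ p * c) :
    a ^ (1 / p) ≤ b * c ^ (1 / p) :=
  calc a ^ (1 / p) ≤ (b ^ p * c) ^ (1 / p) := rpow_le_rpow h (by positivity)
    _ = b * c ^ (1 / p) := by
      rw [mul_rpow_of_nonneg _ _ (by positivity), ← rpow_mul, mul_one_div_cancel hp.ne',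
        rpow_one]

lemma rpow_sub_one_mul_self (a : ℝ≥0∞) {p : ℝ} (hp : 1 ≤ p) : a ^ (p - 1) * a = a ^ p := by
  nth_rw 2 [← rpow_one a]
  rw [← rpow_add_of_nonneg _ _ (by linarith) zero_le_one, sub_add_cancel]

lemma rpow_one_div_sub_one_rpow {t : ℝ≥0∞} (ht0 : t ≠ 0) (httop : t ≠ ∞) {p : ℝ} (hp : p ≠ 0) :
    (t ^ (1 / p - 1)) ^ p = t * (t ^ p)⁻¹ := by
  rw [← rpow_mul, sub_mul, one_div_mul_cancel hp, one_mul, sub_eq_add_neg,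
    rpow_add _ _ ht0 httop, rpow_one, rpow_neg]

lemma rpow_tsum_indicator_le {X I : Type*} (U : I → Set X) {x : X} {N : ℕ}
    (hN : {i | x ∈ U i}.encard ≤ N) (c : I → ℝ≥0∞) {p : ℝ} (hp : 1 ≤ p) :
    (∑' i, (U i).indicator (fun _ => c i) x) ^ p
      ≤ (N : ℝ≥0∞) ^ (p - 1) * ∑' i, (U i).indicator (fun _ => c i ^ p) x := by
  have hfin : {i | x ∈ U i}.Finite := Set.encard_lt_top_iff.1 (hN.trans_lt (by simp))
  set s := hfin.toFinset
  have hs : ∀ i, i ∈ s ↔ x ∈ U i := fun i => hfin.mem_toFinset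
  have htsum : ∀ f : I → ℝ≥0∞, ∑' i, (U i).indicator (fun _ => f i) x = ∑ i ∈ s, f i := by
    intro f
    rw [tsum_eq_sum fun i hi => Set.indicator_of_notMem (mt (hs i).2 hi) _]
    exact Finset.sum_congr rfl fun i hi => Set.indicator_of_mem ((hs i).1 hi) _
  have hcard : s.card ≤ N := by
    rwa [← hfin.coe_toFinset, Set.encard_coe_eq_coe_finsetCard, Nat.cast_le] at hN
  rw [htsum, htsum]
  exact (rpow_sum_le_const_mul_sum_rpow s c hp).trans
    (mul_le_mul_left (rpow_le_rpow (by exact_mod_cast hcard) (by linarith)) _)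

end ENNReal

section Integrals

variable {X : Type*} [MeasurableSpace X]

lemma lintegral_indicator_const_mul (μ : Measure X) {s : Set X} (hs : MeasurableSet s) (c : ℝ≥0∞)
    {f : X → ℝ≥0∞} (hf : Measurable f) :
    ∫⁻ x, s.indicator (fun _ => c) x * f x ∂μ = c * ∫⁻ x in s, f x ∂μ := by
  simp_rw [← Set.indicator_mul_left]
  rw [lintegral_indicator hs, lintegral_const_mul _ hf]

theorem rpow_lintegral_mul_le {μ : Measure X} {K g : X → ℝ≥0∞} (hK : AEMeasurable K μ)
    (hg : AEMeasurable g μ) {p : ℝ} (hp : 1 ≤ p) :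
    (∫⁻ y, K y * g y ∂μ) ^ p ≤ (∫⁻ y, K y ∂μ) ^ (p - 1) * ∫⁻ y, K y * g y ^ p ∂μ := by
  have hp0 : 0 < p := by linarith
  have hsplit : ∀ y, K y * g y = K y ^ (1 - 1 / p) * (K y * g y ^ p) ^ (1 / p) := fun y => by
    rw [mul_rpow_of_nonneg _ _ (by positivity), ← rpow_mul, mul_one_div_cancel hp0.ne',
      rpow_one, ← mul_assoc, ← rpow_add_of_nonneg _ _ (by simpa using inv_le_one_of_one_le₀ hp)
      (by positivity), sub_add_cancel, rpow_one]
  have holder := lintegral_mul_norm_pow_le hK (hK.mul (hg.pow_const p))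
    (by simpa using inv_le_one_of_one_le₀ hp) (by positivity) (sub_add_cancel 1 (1 / p))
  calc (∫⁻ y, K y * g y ∂μ) ^ p
      ≤ ((∫⁻ y, K y ∂μ) ^ (1 - 1 / p) * (∫⁻ y, K y * g y ^ p ∂μ) ^ (1 / p)) ^ p := by
        rw [lintegral_congr hsplit]
        exact rpow_le_rpow holder hp0.le
    _ = (∫⁻ y, K y ∂μ) ^ (p - 1) * ∫⁻ y, K y * g y ^ p ∂μ := by
        rw [mul_rpow_of_nonneg _ _ hp0.le, ← rpow_mul, ← rpow_mul, one_div_mul_cancel hp0.ne',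
          rpow_one, sub_mul, one_mul, one_div_mul_cancel hp0.ne']

/-- Schur's test. -/
theorem lintegral_rpow_lintegral_mul_le {Y : Type*} [MeasurableSpace Y] (μ : Measure X)
    (ν : Measure Y) [SFinite μ] [SFinite ν] {K : X → Y → ℝ≥0∞}
    (hK : Measurable (Function.uncurry K)) {g : Y → ℝ≥0∞} (hg : Measurable g) {A B : ℝ≥0∞}
    (hA : ∀ x, ∫⁻ y, K x y ∂ν ≤ A) (hB : ∀ y, ∫⁻ x, K x y ∂μ ≤ B) {p : ℝ} (hp : 1 ≤ p) :
    ∫⁻ x, (∫⁻ y, K x y * g y ∂ν) ^ p ∂μ ≤ A ^ (p - 1) * B * ∫⁻ y, g y ^ p ∂ν := by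
  have hKg : Measurable fun z : X × Y => K z.1 z.2 * g z.2 ^ p :=
    hK.mul ((hg.comp measurable_snd).pow_const p)
  calc ∫⁻ x, (∫⁻ y, K x y * g y ∂ν) ^ p ∂μ
      ≤ ∫⁻ x, A ^ (p - 1) * ∫⁻ y, K x y * g y ^ p ∂ν ∂μ := by
        refine lintegral_mono fun x => (rpow_lintegral_mul_le hK.of_uncurry_left.aemeasurable
          hg.aemeasurable hp).trans (mul_le_mul_left ?_ _)
        exact rpow_le_rpow (hA x) (by linarith)
    _ = A ^ (p - 1) * ∫⁻ y, (∫⁻ x, K x y ∂μ) * g y ^ p ∂ν := by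
        rw [lintegral_const_mul _ hKg.lintegral_prod_right',
          lintegral_lintegral_swap hKg.aemeasurable]
        simp_rw [lintegral_mul_const _ hK.of_uncurry_right]
    _ ≤ A ^ (p - 1) * ∫⁻ y, B * g y ^ p ∂ν := by gcongr with y; exact hB y
    _ = A ^ (p - 1) * B * ∫⁻ y, g y ^ p ∂ν := by
        rw [lintegral_const_mul _ (hg.pow_const p), mul_assoc]

end Integrals

section Covering

variable {X I : Type*} [MeasurableSpace X] (μ : Measure X) {U : I → Set X}

theorem lintegral_rpow_mul_tsum_indicator_le [Countable I] (hU : ∀ i, MeasurableSet (U i))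
    {N : ℕ} (hN : ∀ x, {i | x ∈ U i}.encard ≤ N) (c : I → ℝ≥0∞) {v : X → ℝ≥0∞}
    (hv : Measurable v) {p : ℝ} (hp : 1 ≤ p) :
    ∫⁻ x, (v x * ∑' i, (U i).indicator (fun _ => c i) x) ^ p ∂μ
      ≤ (N : ℝ≥0∞) ^ (p - 1) * ∑' i, c i ^ p * ∫⁻ x in U i, v x ^ p ∂μ := by
  have hp0 : 0 ≤ p := by linarith
  have hmeas : ∀ i, Measurable fun x => (U i).indicator (fun _ => c i ^ p) x * v x ^ p :=
    fun i => (measurable_const.indicator (hU i)).mul (hv.pow_const p)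
  calc ∫⁻ x, (v x * ∑' i, (U i).indicator (fun _ => c i) x) ^ p ∂μ
      ≤ ∫⁻ x, (N : ℝ≥0∞) ^ (p - 1) *
          ∑' i, (U i).indicator (fun _ => c i ^ p) x * v x ^ p ∂μ := by
        refine lintegral_mono fun x => ?_
        rw [mul_rpow_of_nonneg _ _ hp0, ENNReal.tsum_mul_right, mul_comm (v x ^ p), ← mul_assoc]
        gcongr
        exact rpow_tsum_indicator_le U (hN x) c hp
    _ = (N : ℝ≥0∞) ^ (p - 1) * ∑' i, c i ^ p * ∫⁻ x in U i, v x ^ p ∂μ := by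
        rw [lintegral_const_mul _ (Measurable.tsum hmeas),
          lintegral_tsum fun i => (hmeas i).aemeasurable]
        congr 2 with i
        exact lintegral_indicator_const_mul μ (hU i) _ (hv.pow_const p)

/-- Spreading the point masses `a i` uniformly over the sets `U i`. -/
theorem tsum_mul_le_lintegral_mul_tsum_indicator [Countable I] (hU : ∀ i, MeasurableSet (U i))
    (hU0 : ∀ i, μ (U i) ≠ 0) (hUtop : ∀ i, μ (U i) ≠ ∞) {F : X → ℝ≥0∞} (hF : Measurable F)
    (a b : I → ℝ≥0∞) (hb : ∀ i, ∀ y ∈ U i, b i ≤ F y) :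
    ∑' i, a i * b i ≤ ∫⁻ y, F y * ∑' i, (U i).indicator (fun _ => a i / μ (U i)) y ∂μ := by
  have hmeas : ∀ i, Measurable fun y => (U i).indicator (fun _ => a i / μ (U i)) y * F y :=
    fun i => (measurable_const.indicator (hU i)).mul hF
  calc ∑' i, a i * b i = ∑' i, a i / μ (U i) * (b i * μ (U i)) := by
        congr 1 with i
        rw [mul_comm (b i), ← mul_assoc, ENNReal.div_mul_cancel (hU0 i) (hUtop i)]
    _ ≤ ∑' i, a i / μ (U i) * ∫⁻ y in U i, F y ∂μ := by
        gcongr with i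
        rw [← setLIntegral_const]
        exact setLIntegral_mono hF (hb i)
    _ = ∫⁻ y, F y * ∑' i, (U i).indicator (fun _ => a i / μ (U i)) y ∂μ := by
        simp_rw [ENNReal.tsum_mul_left.symm, mul_comm (F _)]
        rw [lintegral_tsum fun i => (hmeas i).aemeasurable]
        congr 1 with i
        exact (lintegral_indicator_const_mul μ (hU i) _ hF).symm

lemma div_rpow_mul_setLIntegral_rpow_le {s : Set X} (hs : MeasurableSet s) (hs0 : μ s ≠ 0)
    (hstop : μ s ≠ ∞) (a : ℝ≥0∞) (v : X → ℝ≥0∞) {p : ℝ} (hp : 0 < p) :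
    (a / μ s) ^ p * ∫⁻ x in s, v x ^ p ∂μ ≤ a ^ p * (μ s ^ (1 / p - 1) * ⨆ x ∈ s, v x) ^ p := by
  have hv : ∫⁻ x in s, v x ^ p ∂μ ≤ (⨆ x ∈ s, v x) ^ p * μ s := by
    rw [← setLIntegral_const]
    exact setLIntegral_mono' hs fun x hx => rpow_le_rpow (le_biSup v hx) hp.le
  calc (a / μ s) ^ p * ∫⁻ x in s, v x ^ p ∂μ ≤ (a / μ s) ^ p * ((⨆ x ∈ s, v x) ^ p * μ s) := by
        gcongr
    _ = a ^ p * (μ s ^ (1 / p - 1) * ⨆ x ∈ s, v x) ^ p := by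
        rw [div_rpow_of_nonneg _ _ hp.le, mul_rpow_of_nonneg _ _ hp.le,
          rpow_one_div_sub_one_rpow hs0 hstop hp.ne', div_eq_mul_inv]
        ring

end Covering

section Kernel

variable {X I : Type*} (U : I → Set X) (R : X → X → ℂ) (xi : I → X) (m : X → X → ℝ)

/-- Stands in for `(osc + |R|) · m`, which need not be measurable: the supremum here runs over
the countable index set only. -/
noncomputable def sampledSupKernel (x y : X) : ℝ≥0∞ :=
  (⨆ i, (U i).indicator (fun _ => (‖R x (xi i)‖₊ : ℝ≥0∞)) y) * ENNReal.ofReal (m x y)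

theorem measurable_sampledSupKernel [MeasurableSpace X] [Countable I]
    (hU : ∀ i, MeasurableSet (U i)) (hR : Measurable (Function.uncurry R))
    (hm : Measurable (Function.uncurry m)) :
    Measurable (Function.uncurry (sampledSupKernel U R xi m)) :=
  (Measurable.iSup fun i => (hR.comp (measurable_fst.prodMk measurable_const)).enorm.indicator
    (measurable_snd (hU i))).mul hm.ennreal_ofReal

variable {U R} in
lemma nnnorm_le_osc_add {Γ : X → X → ℂ} (hΓ : ∀ x y, ‖Γ x y‖ = 1) {i : I} {x y z : X}
    (hy : y ∈ U i) (hz : z ∈ U i) :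
    (‖R x z‖₊ : ℝ≥0∞) ≤ osc U R Γ x y + ‖R x y‖₊ := by
  have hosc : (‖R x y - Γ y z * R x z‖₊ : ℝ≥0∞) ≤ osc U R Γ x y :=
    le_biSup (fun z => (‖R x y - Γ y z * R x z‖₊ : ℝ≥0∞)) (Set.mem_biUnion (x := i) hy hz)
  have hΓz : ‖Γ y z‖₊ = 1 := NNReal.eq (by simpa using hΓ y z)
  calc (‖R x z‖₊ : ℝ≥0∞) = ‖Γ y z * R x z‖₊ := by rw [nnnorm_mul, hΓz, one_mul]
    _ ≤ ‖R x y - Γ y z * R x z‖₊ + ‖R x y‖₊ := by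
        rw [add_comm]
        exact_mod_cast nnnorm_le_nnnorm_add_nnnorm_sub _ _
    _ ≤ osc U R Γ x y + ‖R x y‖₊ := by gcongr

variable {U xi} in
theorem sampledSupKernel_le_osc_add {Γ : X → X → ℂ} (hΓ : ∀ x y, ‖Γ x y‖ = 1)
    (hxi : ∀ i, xi i ∈ U i) (x y : X) :
    sampledSupKernel U R xi m x y ≤ (osc U R Γ x y + ‖R x y‖₊) * ENNReal.ofReal (m x y) := by
  refine mul_le_mul_left (iSup_le fun i => ?_) _
  by_cases hy : y ∈ U i
  · rw [Set.indicator_of_mem hy]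
    exact nnnorm_le_osc_add hΓ hy (hxi i)
  · simp [hy]

variable {U m} in
theorem nnnorm_mul_le_sampledSupKernel_mul {w : X → ℝ} (hw : ∀ x, 0 < w x)
    (hmw : ∀ x y, max (w x / w y) (w y / w x) ≤ m x y) {i : I} (x : X) {y : X} (hy : y ∈ U i) :
    (‖R x (xi i)‖₊ : ℝ≥0∞) * ENNReal.ofReal (w x)
      ≤ sampledSupKernel U R xi m x y * ENNReal.ofReal (w y) := by
  have hwx : w x ≤ m x y * w y := (div_le_iff₀ (hw y)).1 ((le_max_left _ _).trans (hmw x y))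
  rw [sampledSupKernel, mul_assoc, ← ENNReal.ofReal_mul' (hw y).le]
  gcongr
  exact le_iSup_of_le i (Set.indicator_of_mem hy (fun _ => (‖R x (xi i)‖₊ : ℝ≥0∞))).ge

variable {U m} in
theorem tsum_mul_nnnorm_mul_le_lintegral_sampledSupKernel_mul [MeasurableSpace X] [Countable I]
    (μ : Measure X) (hU : ∀ i, MeasurableSet (U i)) (hU0 : ∀ i, μ (U i) ≠ 0)
    (hUtop : ∀ i, μ (U i) ≠ ∞) (hR : Measurable (Function.uncurry R))
    (hm : Measurable (Function.uncurry m)) {w : X → ℝ} (hw : ∀ x, 0 < w x) (hwm : Measurable w)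
    (hmw : ∀ x y, max (w x / w y) (w y / w x) ≤ m x y) (a : I → ℝ≥0∞) (x : X) :
    (∑' i, a i * ‖R x (xi i)‖₊) * ENNReal.ofReal (w x)
      ≤ ∫⁻ y, sampledSupKernel U R xi m x y *
          (ENNReal.ofReal (w y) * ∑' i, (U i).indicator (fun _ => a i / μ (U i)) y) ∂μ := by
  rw [← ENNReal.tsum_mul_right]
  simp_rw [mul_assoc, ← mul_assoc (sampledSupKernel U R xi m x _)]
  exact tsum_mul_le_lintegral_mul_tsum_indicator μ hU hU0 hUtop
    ((measurable_sampledSupKernel U R xi m hU hR hm).of_uncurry_left.mul hwm.ennreal_ofReal) _ _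
    fun i y hy => nnnorm_mul_le_sampledSupKernel_mul R xi hw hmw x hy

end Kernel

theorem stmt_14_general
    {X : Type*} [MeasurableSpace X] (μ : Measure X)
    {I : Type*} [Countable I] (U : I → Set X)
    (hUmeas : ∀ i, MeasurableSet (U i))
    (hUpos : ∀ i, 0 < μ (U i)) (hUfin : ∀ i, μ (U i) < ∞)
    (hcov : ∀ x : X, ∃ i, x ∈ U i)
    (N : ℕ) (hN : ∀ x : X, {i : I | x ∈ U i}.encard ≤ N)
    (w : X → ℝ) (hw : ∀ x, 0 < w x) (hwm : Measurable w)
    (p : ℝ) (hp : 1 ≤ p)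
    (m : X → X → ℝ) (hmmeas : Measurable (Function.uncurry m))
    (hmw : ∀ x y, max (w x / w y) (w y / w x) ≤ m x y)
    (xi : I → X) (hxi : ∀ i, xi i ∈ U i)
    (R Γ : X → X → ℂ) (hRmeas : Measurable (Function.uncurry R))
    (hΓ : ∀ x y, ‖Γ x y‖ = 1)
    (A : ℝ≥0∞)
    (hA1 : ∀ x, ∫⁻ y, (osc U R Γ x y + (‖R x y‖₊ : ℝ≥0∞)) * ENNReal.ofReal (m x y) ∂μ ≤ A)
    (hA2 : ∀ y, ∫⁻ x, (osc U R Γ x y + (‖R x y‖₊ : ℝ≥0∞)) * ENNReal.ofReal (m x y) ∂μ ≤ A) :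
    ∃ C : ℝ≥0∞, 0 < C ∧ C < ∞ ∧ ∀ lam : I → ℂ,
      (∫⁻ x, (∑' i, (‖lam i‖₊ : ℝ≥0∞) * (‖R x (xi i)‖₊ : ℝ≥0∞)) ^ p
          * ENNReal.ofReal (w x) ^ p ∂μ) ^ (1/p)
        ≤ C * A * (∑' i, (‖lam i‖₊ : ℝ≥0∞) ^ p
            * (μ (U i) ^ (1/p - 1) * ⨆ x ∈ U i, ENNReal.ofReal (w x)) ^ p) ^ (1/p) := by
  have hp0 : 0 < p := by linarith
  have : SigmaFinite μ := Measure.sigmaFinite_of_countable (Set.countable_range U)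
    (by rintro _ ⟨i, rfl⟩; exact hUfin i)
    (Set.sUnion_range U ▸ Set.eq_univ_iff_forall.2 fun x => Set.mem_iUnion.2 (hcov x))
  refine ⟨((N : ℝ≥0∞) + 1) ^ ((p - 1) / p), rpow_pos (by positivity) (by simp),
    rpow_lt_top_of_nonneg (by bound) (by simp), fun lam => ?_⟩
  set g : X → ℝ≥0∞ := fun y =>
    ENNReal.ofReal (w y) * ∑' i, (U i).indicator (fun _ => (‖lam i‖₊ : ℝ≥0∞) / μ (U i)) y
  have hg : Measurable g := hwm.ennreal_ofReal.mul
    (Measurable.tsum fun i => measurable_const.indicator (hUmeas i))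
  have hschur := lintegral_rpow_lintegral_mul_le μ μ
    (measurable_sampledSupKernel U R xi m hUmeas hRmeas hmmeas) hg
    (fun x => (lintegral_mono (sampledSupKernel_le_osc_add R m hΓ hxi x)).trans (hA1 x))
    (fun y => (lintegral_mono (sampledSupKernel_le_osc_add R m hΓ hxi · y)).trans (hA2 y)) hp
  have hgp : ∫⁻ y, g y ^ p ∂μ ≤ ((N : ℝ≥0∞) + 1) ^ (p - 1) * ∑' i, (‖lam i‖₊ : ℝ≥0∞) ^ p
      * (μ (U i) ^ (1/p - 1) * ⨆ x ∈ U i, ENNReal.ofReal (w x)) ^ p :=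
    (lintegral_rpow_mul_tsum_indicator_le μ hUmeas hN _ hwm.ennreal_ofReal hp).trans
      (mul_le_mul' (rpow_le_rpow le_self_add (by linarith)) (ENNReal.tsum_le_tsum fun i =>
        div_rpow_mul_setLIntegral_rpow_le μ (hUmeas i) (hUpos i).ne' (hUfin i).ne _ _ hp0))
  refine rpow_one_div_le_mul_of_le hp0 ?_
  calc ∫⁻ x, (∑' i, (‖lam i‖₊ : ℝ≥0∞) * ‖R x (xi i)‖₊) ^ p * ENNReal.ofReal (w x) ^ p ∂μ
      ≤ ∫⁻ x, (∫⁻ y, sampledSupKernel U R xi m x y * g y ∂μ) ^ p ∂μ := lintegral_mono fun x => by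
        rw [← mul_rpow_of_nonneg _ _ hp0.le]
        exact rpow_le_rpow (tsum_mul_nnnorm_mul_le_lintegral_sampledSupKernel_mul R xi μ hUmeas
          (fun i => (hUpos i).ne') (fun i => (hUfin i).ne) hRmeas hmmeas hw hwm hmw _ x) hp0.le
    _ ≤ A ^ p * ∫⁻ y, g y ^ p ∂μ := by rwa [← rpow_sub_one_mul_self A hp]
    _ ≤ (((N : ℝ≥0∞) + 1) ^ ((p - 1) / p) * A) ^ p * ∑' i, (‖lam i‖₊ : ℝ≥0∞) ^ p
          * (μ (U i) ^ (1/p - 1) * ⨆ x ∈ U i, ENNReal.ofReal (w x)) ^ p := by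
        rw [mul_rpow_of_nonneg _ _ hp0.le, ← rpow_mul, div_mul_cancel₀ _ hp0.ne',
          mul_comm _ (A ^ p), mul_assoc]
        gcongr

/-- **Norm estimate (5.9) of Lemma 5.10 specialized to `Y = L^p_w`.**
`‖Σ_i |λ_i| |R(·,x_i)|‖_{L^p_w} ≤ C A (Σ_i |λ_i|^p d_p(i)^p)^{1/p}`, with
`d_p(i) = μ(U_i)^{1/p−1} w̃(i)`, `w̃(i) = sup_{x ∈ U_i} w(x)`. -/
theorem stmt_14
    {X : Type*} [MeasurableSpace X] (μ : Measure X)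
    {I : Type*} [Countable I] (U : I → Set X)
    (hUmeas : ∀ i, MeasurableSet (U i))
    (hUpos : ∀ i, 0 < μ (U i)) (hUfin : ∀ i, μ (U i) < ∞)
    (hcov : ∀ x : X, ∃ i, x ∈ U i)
    (N : ℕ) (hN : ∀ x : X, {i : I | x ∈ U i}.encard ≤ N)
    (w : X → ℝ) (hw : ∀ x, 0 < w x) (hwm : Measurable w)
    (p : ℝ) (hp : 1 ≤ p)
    (m : X → X → ℝ) (hm1 : ∀ x y, 1 ≤ m x y) (hmsymm : ∀ x y, m x y = m y x)
    (hmsub : ∀ x y z, m x y ≤ m x z * m z y) (hmmeas : Measurable (Function.uncurry m))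
    (hmw : ∀ x y, max (w x / w y) (w y / w x) ≤ m x y)
    (Cm : ℝ) (hCm : ∀ i, ∀ x ∈ U i, ∀ y ∈ U i, m x y ≤ Cm)
    (Ct : ℝ≥0∞) (hmod : ∀ i j, (U i ∩ U j).Nonempty → μ (U i) ≤ Ct * μ (U j))
    (xi : I → X) (hxi : ∀ i, xi i ∈ U i)
    (R Γ : X → X → ℂ) (hRmeas : Measurable (Function.uncurry R))
    (hΓ : ∀ x y, ‖Γ x y‖ = 1)
    (A : ℝ≥0∞)
    (hA1 : ∀ x, ∫⁻ y, (osc U R Γ x y + (‖R x y‖₊ : ℝ≥0∞)) * ENNReal.ofReal (m x y) ∂μ ≤ A)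
    (hA2 : ∀ y, ∫⁻ x, (osc U R Γ x y + (‖R x y‖₊ : ℝ≥0∞)) * ENNReal.ofReal (m x y) ∂μ ≤ A) :
    ∃ C : ℝ≥0∞, 0 < C ∧ C < ∞ ∧ ∀ lam : I → ℂ,
      (∫⁻ x, (∑' i, (‖lam i‖₊ : ℝ≥0∞) * (‖R x (xi i)‖₊ : ℝ≥0∞)) ^ p
          * ENNReal.ofReal (w x) ^ p ∂μ) ^ (1/p)
        ≤ C * A * (∑' i, (‖lam i‖₊ : ℝ≥0∞) ^ p
            * (μ (U i) ^ (1/p - 1) * ⨆ x ∈ U i, ENNReal.ofReal (w x)) ^ p) ^ (1/p) :=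
  stmt_14_general μ U hUmeas hUpos hUfin hcov N hN w hw hwm p hp m hmmeas hmw xi hxi R Γ hRmeas hΓ A
    hA1 hA2
end

section
/- Let 1 ≤ p < ∞, let m be an admissible weight with m(x,y) ≥ max(w(x)/w(y), w(y)/w(x)) and sup_{x,y∈U_i} m(x,y) ≤ C_m for all i, suppose R(x,y) = conj(R(y,x)) for all x,y, and choose points x_i ∈ U_i. Suppose ∫_X |R(x,y)| m(x,y) dμ(y) ≤ A₁ for all x, ∫_X |R(x,y)| m(x,y) dμ(x) ≤ A₁ for all y, and ∫_X osc(y,x) m(x,y) dμ(x) ≤ A₂ for all y. Let F ∈ L^p_w be such that for every x ∈ X the integral ∫_X R(x,y) F(y) dμ(y) converges absolutely and F(x) = ∫_X R(x,y) F(y) dμ(y). Then ‖ Σ_{i∈I} |F(x_i)| χ_{U_i} ‖_{L^p_w} ≤ N max( C_m A₁, A₁ + A₂ ) ‖F‖_{L^p_w}. (Sampling inequality (5.11) of Lemma 5.11 specialized to Y = L^p_w.) -/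
open MeasureTheory
open scoped ENNReal NNReal

section Schur

variable {X : Type*} [MeasurableSpace X] {μ : Measure X} {p : ℝ}

/-- Hölder's inequality for the measure `T · μ`. -/
theorem rpow_lintegral_mul_le_s16 (hp : 1 ≤ p) {T f : X → ℝ≥0∞} (hT : Measurable T)
    (hf : Measurable f) :
    (∫⁻ y, T y * f y ∂μ) ^ p ≤ (∫⁻ y, T y ∂μ) ^ (p - 1) * ∫⁻ y, T y * f y ^ p ∂μ := by
  have hp0 : 0 < p := zero_lt_one.trans_le hp
  have hq0 : 0 ≤ 1 - 1 / p := sub_nonneg.2 ((div_le_one hp0).2 hp)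
  have hsplit : ∀ y, T y * f y = T y ^ (1 - 1 / p) * (T y * f y ^ p) ^ (1 / p) := fun y => by
    rw [ENNReal.mul_rpow_of_nonneg _ _ (by positivity), ← ENNReal.rpow_mul,
      mul_one_div_cancel hp0.ne', ENNReal.rpow_one, ← mul_assoc,
      ← ENNReal.rpow_add_of_nonneg _ _ hq0 (by positivity), sub_add_cancel, ENNReal.rpow_one]
  have holder := ENNReal.lintegral_mul_norm_pow_le (μ := μ) hT.aemeasurable
    (hT.mul (hf.pow_const p)).aemeasurable hq0 (by positivity) (sub_add_cancel 1 (1 / p))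
  simp only [Pi.mul_apply, ← hsplit] at holder
  calc (∫⁻ y, T y * f y ∂μ) ^ p
      ≤ ((∫⁻ y, T y ∂μ) ^ (1 - 1 / p) * (∫⁻ y, T y * f y ^ p ∂μ) ^ (1 / p)) ^ p := by
        gcongr
    _ = (∫⁻ y, T y ∂μ) ^ (p - 1) * ∫⁻ y, T y * f y ^ p ∂μ := by
        rw [ENNReal.mul_rpow_of_nonneg _ _ hp0.le, ← ENNReal.rpow_mul, ← ENNReal.rpow_mul,
          sub_mul, one_div_mul_cancel hp0.ne', one_mul, ENNReal.rpow_one]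

theorem lintegral_schur_test [SFinite μ] (hp : 1 ≤ p) {T : X → X → ℝ≥0∞}
    (hT : Measurable (Function.uncurry T)) {f : X → ℝ≥0∞} (hf : Measurable f) {Cr Cc : ℝ≥0∞}
    (hrow : ∀ x, ∫⁻ y, T x y ∂μ ≤ Cr) (hcol : ∀ y, ∫⁻ x, T x y ∂μ ≤ Cc) :
    (∫⁻ x, (∫⁻ y, T x y * f y ∂μ) ^ p ∂μ) ^ (1 / p)
      ≤ max Cr Cc * (∫⁻ y, f y ^ p ∂μ) ^ (1 / p) := by
  have hp0 : 0 < p := zero_lt_one.trans_le hp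
  have hTf : Measurable fun z : X × X => T z.1 z.2 * f z.2 ^ p :=
    hT.mul ((hf.comp measurable_snd).pow_const p)
  have hmax : Cr ^ (p - 1) * Cc ≤ max Cr Cc ^ p := calc
    Cr ^ (p - 1) * Cc ≤ max Cr Cc ^ (p - 1) * max Cr Cc ^ (1 : ℝ) := by
      rw [ENNReal.rpow_one]
      exact mul_le_mul' (ENNReal.rpow_le_rpow (le_max_left _ _) (by linarith)) (le_max_right _ _)
    _ = max Cr Cc ^ p := by
      rw [← ENNReal.rpow_add_of_nonneg _ _ (by linarith) zero_le_one, sub_add_cancel]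
  have hbound : ∫⁻ x, (∫⁻ y, T x y * f y ∂μ) ^ p ∂μ ≤ max Cr Cc ^ p * ∫⁻ y, f y ^ p ∂μ := calc
    ∫⁻ x, (∫⁻ y, T x y * f y ∂μ) ^ p ∂μ
        ≤ ∫⁻ x, Cr ^ (p - 1) * ∫⁻ y, T x y * f y ^ p ∂μ ∂μ := by
      refine lintegral_mono fun x => (rpow_lintegral_mul_le_s16 hp hT.of_uncurry_left hf).trans ?_
      gcongr
      exact hrow x
    _ = Cr ^ (p - 1) * ∫⁻ y, (∫⁻ x, T x y ∂μ) * f y ^ p ∂μ := by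
      rw [lintegral_const_mul _ hTf.lintegral_prod_right',
        lintegral_lintegral_swap hTf.aemeasurable]
      congr 1
      exact lintegral_congr fun y => lintegral_mul_const (f y ^ p) hT.of_uncurry_right
    _ ≤ Cr ^ (p - 1) * ∫⁻ y, Cc * f y ^ p ∂μ := by
      gcongr with y
      exact hcol y
    _ ≤ max Cr Cc ^ p * ∫⁻ y, f y ^ p ∂μ := by
      rw [lintegral_const_mul _ (hf.pow_const p), ← mul_assoc]
      gcongr
  calc (∫⁻ x, (∫⁻ y, T x y * f y ∂μ) ^ p ∂μ) ^ (1 / p)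
      ≤ (max Cr Cc ^ p * ∫⁻ y, f y ^ p ∂μ) ^ (1 / p) := by gcongr
    _ = max Cr Cc * (∫⁻ y, f y ^ p ∂μ) ^ (1 / p) := by
      rw [ENNReal.mul_rpow_of_nonneg _ _ (by positivity), ← ENNReal.rpow_mul,
        mul_one_div_cancel hp0.ne', ENNReal.rpow_one]

end Schur

theorem tsum_indicator_one_le_of_encard_le {I X : Type*} (U : I → Set X) {x : X} {N : ℕ}
    (hN : {i : I | x ∈ U i}.encard ≤ N) :
    ∑' i, (U i).indicator (fun _ => (1 : ℝ≥0∞)) x ≤ N := by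
  have hcount : ∑' i, (U i).indicator (fun _ => (1 : ℝ≥0∞)) x
      = ∑' i, {i : I | x ∈ U i}.indicator (fun _ => (1 : ℝ≥0∞)) i :=
    tsum_congr fun i => by by_cases h : x ∈ U i <;> simp [h]
  rw [hcount, ← tsum_subtype, ENNReal.tsum_set_one]
  exact_mod_cast ENat.toENNReal_le.2 hN

theorem enorm_le_add_osc {X I : Type*} {U : I → Set X} {R Γ : X → X → ℂ}
    (hΓ : ∀ x y, ‖Γ x y‖ = 1) {x y z : X} (hz : z ∈ ⋃ i ∈ {i : I | x ∈ U i}, U i) :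
    ‖R y z‖ₑ ≤ ‖R y x‖ₑ + osc U R Γ y x := calc
  ‖R y z‖ₑ = ‖R y x - (R y x - Γ x z * R y z)‖ₑ := by
    rw [sub_sub_cancel, enorm_mul, ← ofReal_norm (Γ x z), hΓ, ENNReal.ofReal_one, one_mul]
  _ ≤ ‖R y x‖ₑ + ‖R y x - Γ x z * R y z‖ₑ := enorm_sub_le
  _ ≤ ‖R y x‖ₑ + osc U R Γ y x := by
    gcongr
    exact le_iSup₂ (f := fun z _ => (‖R y x - Γ x z * R y z‖₊ : ℝ≥0∞)) z hz

section SamplingKernel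

variable {X I : Type*} [MeasurableSpace X] {μ : Measure X} {U : I → Set X}
  {R : X → X → ℂ} {xi : I → X} {m : X → X → ℝ}

noncomputable def samplingKernel (U : I → Set X) (R : X → X → ℂ) (xi : I → X)
    (m : X → X → ℝ) (x y : X) : ℝ≥0∞ :=
  (∑' i, (U i).indicator (fun _ => (1 : ℝ≥0∞)) x * ‖R (xi i) y‖ₑ) * ENNReal.ofReal (m x y)

theorem measurable_samplingKernel [Countable I] (hU : ∀ i, MeasurableSet (U i))
    (hR : Measurable (Function.uncurry R)) (hm : Measurable (Function.uncurry m)) :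
    Measurable (Function.uncurry (samplingKernel U R xi m)) :=
  (Measurable.tsum fun i =>
    ((measurable_const.indicator (hU i)).comp measurable_fst).mul
      (hR.comp (measurable_const.prodMk measurable_snd)).enorm).mul hm.ennreal_ofReal

theorem lintegral_samplingKernel_row_le [Countable I] (hR : Measurable (Function.uncurry R))
    (hm : Measurable (Function.uncurry m)) (hm0 : ∀ x y, 0 ≤ m x y)
    (hmul : ∀ x y z, m x y ≤ m x z * m z y) {N : ℕ} (hN : ∀ x, {i : I | x ∈ U i}.encard ≤ N)
    {Cm : ℝ} (hCm : ∀ i, ∀ x ∈ U i, ∀ y ∈ U i, m x y ≤ Cm) (hxi : ∀ i, xi i ∈ U i) {A : ℝ≥0∞}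
    (hA : ∀ x, ∫⁻ y, ‖R x y‖ₑ * ENNReal.ofReal (m x y) ∂μ ≤ A) (x : X) :
    ∫⁻ y, samplingKernel U R xi m x y ∂μ ≤ N * (ENNReal.ofReal Cm * A) := by
  have hRm : ∀ z z', Measurable fun y => ‖R z y‖ₑ * ENNReal.ofReal (m z' y) := fun z z' =>
    hR.of_uncurry_left.enorm.fun_mul hm.of_uncurry_left.ennreal_ofReal
  have hterm : ∀ i, (U i).indicator (fun _ => (1 : ℝ≥0∞)) x
      * ∫⁻ y, ‖R (xi i) y‖ₑ * ENNReal.ofReal (m x y) ∂μ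
      ≤ (U i).indicator (fun _ => (1 : ℝ≥0∞)) x * (ENNReal.ofReal Cm * A) := by
    intro i
    by_cases hx : x ∈ U i
    · simp only [Set.indicator_of_mem hx, one_mul]
      -- `m(x, y) ≤ m(x, x_i) m(x_i, y) ≤ C_m m(x_i, y)` since `x, x_i ∈ U_i`
      have hmx : ∀ y, ENNReal.ofReal (m x y) ≤ ENNReal.ofReal Cm * ENNReal.ofReal (m (xi i) y) :=
        fun y => by
          rw [← ENNReal.ofReal_mul' (hm0 _ _)]
          exact ENNReal.ofReal_le_ofReal ((hmul x y (xi i)).trans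
            (mul_le_mul_of_nonneg_right (hCm i x hx (xi i) (hxi i)) (hm0 _ _)))
      calc ∫⁻ y, ‖R (xi i) y‖ₑ * ENNReal.ofReal (m x y) ∂μ
          ≤ ∫⁻ y, ENNReal.ofReal Cm * (‖R (xi i) y‖ₑ * ENNReal.ofReal (m (xi i) y)) ∂μ :=
            lintegral_mono fun y => (mul_le_mul_right (hmx y) _).trans_eq (by ring)
        _ ≤ ENNReal.ofReal Cm * A := by
            rw [lintegral_const_mul _ (hRm _ _)]
            gcongr
            exact hA (xi i)
    · simp [Set.indicator_of_notMem hx]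
  calc ∫⁻ y, samplingKernel U R xi m x y ∂μ
      = ∑' i, (U i).indicator (fun _ => (1 : ℝ≥0∞)) x
          * ∫⁻ y, ‖R (xi i) y‖ₑ * ENNReal.ofReal (m x y) ∂μ := by
        simp only [samplingKernel, ← ENNReal.tsum_mul_right, mul_assoc]
        rw [lintegral_tsum fun i => ((hRm _ _).const_mul _).aemeasurable]
        exact tsum_congr fun i => lintegral_const_mul _ (hRm _ _)
    _ ≤ ∑' i, (U i).indicator (fun _ => (1 : ℝ≥0∞)) x * (ENNReal.ofReal Cm * A) :=
        ENNReal.tsum_le_tsum hterm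
    _ ≤ N * (ENNReal.ofReal Cm * A) := by
        rw [ENNReal.tsum_mul_right]
        gcongr
        exact tsum_indicator_one_le_of_encard_le U (hN x)

theorem lintegral_samplingKernel_col_le {Γ : X → X → ℂ} (hR : Measurable (Function.uncurry R))
    (hm : Measurable (Function.uncurry m)) (hΓ : ∀ x y, ‖Γ x y‖ = 1)
    (hRsymm : ∀ x y, ‖R x y‖ₑ = ‖R y x‖ₑ) {N : ℕ} (hN : ∀ x, {i : I | x ∈ U i}.encard ≤ N)
    (hxi : ∀ i, xi i ∈ U i) {A₁ A₂ : ℝ≥0∞}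
    (hA₁ : ∀ y, ∫⁻ x, ‖R x y‖ₑ * ENNReal.ofReal (m x y) ∂μ ≤ A₁)
    (hA₂ : ∀ y, ∫⁻ x, osc U R Γ y x * ENNReal.ofReal (m x y) ∂μ ≤ A₂) (y : X) :
    ∫⁻ x, samplingKernel U R xi m x y ∂μ ≤ N * (A₁ + A₂) := by
  have hosc : ∀ x i, x ∈ U i → ‖R (xi i) y‖ₑ ≤ ‖R x y‖ₑ + osc U R Γ y x := fun x i hx => by
    rw [hRsymm, hRsymm x]
    exact enorm_le_add_osc hΓ (Set.mem_biUnion (x := i) hx (hxi i))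
  have hpt : ∀ x, samplingKernel U R xi m x y
      ≤ N * ((‖R x y‖ₑ + osc U R Γ y x) * ENNReal.ofReal (m x y)) := fun x => calc
    samplingKernel U R xi m x y
        ≤ ((∑' i, (U i).indicator (fun _ => (1 : ℝ≥0∞)) x) * (‖R x y‖ₑ + osc U R Γ y x))
          * ENNReal.ofReal (m x y) := by
      rw [samplingKernel]
      gcongr ?_ * _
      rw [← ENNReal.tsum_mul_right]
      refine ENNReal.tsum_le_tsum fun i => ?_
      by_cases hx : x ∈ U i
      · simpa [Set.indicator_of_mem hx] using hosc x i hx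
      · simp [Set.indicator_of_notMem hx]
    _ ≤ N * ((‖R x y‖ₑ + osc U R Γ y x) * ENNReal.ofReal (m x y)) := by
      rw [mul_assoc]
      gcongr
      exact tsum_indicator_one_le_of_encard_le U (hN x)
  calc ∫⁻ x, samplingKernel U R xi m x y ∂μ
      ≤ N * ∫⁻ x, (‖R x y‖ₑ + osc U R Γ y x) * ENNReal.ofReal (m x y) ∂μ := by
        rw [← lintegral_const_mul' _ _ (ENNReal.natCast_ne_top N)]
        exact lintegral_mono hpt
    _ ≤ N * (A₁ + A₂) := by
        simp only [add_mul]
        rw [lintegral_add_left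
          (hR.of_uncurry_right.enorm.fun_mul hm.of_uncurry_right.ennreal_ofReal)]
        gcongr
        exacts [hA₁ y, hA₂ y]

theorem tsum_mul_indicator_mul_le_lintegral_samplingKernel [Countable I] {w : X → ℝ}
    {F : X → ℂ} (hR : Measurable (Function.uncurry R)) (hm : Measurable (Function.uncurry m))
    (hm0 : ∀ x y, 0 ≤ m x y) (hw : Measurable w) (hmw : ∀ x y, w x ≤ m x y * w y)
    (hF : Measurable F) (hrep : ∀ x, F x = ∫ y, R x y * F y ∂μ) (x : X) :
    (∑' i, ‖F (xi i)‖ₑ * (U i).indicator (fun _ => (1 : ℝ≥0∞)) x) * ENNReal.ofReal (w x)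
      ≤ ∫⁻ y, samplingKernel U R xi m x y * (‖F y‖ₑ * ENNReal.ofReal (w y)) ∂μ := by
  have hg : ∀ z, Measurable fun y =>
      ‖R z y‖ₑ * (ENNReal.ofReal (m x y) * (‖F y‖ₑ * ENNReal.ofReal (w y))) := fun z =>
    hR.of_uncurry_left.enorm.fun_mul
      (hm.of_uncurry_left.ennreal_ofReal.fun_mul (hF.enorm.fun_mul hw.ennreal_ofReal))
  have hsample : ∀ z, ‖F z‖ₑ * ENNReal.ofReal (w x)
      ≤ ∫⁻ y, ‖R z y‖ₑ * (ENNReal.ofReal (m x y) * (‖F y‖ₑ * ENNReal.ofReal (w y))) ∂μ := by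
    intro z
    calc ‖F z‖ₑ * ENNReal.ofReal (w x)
        ≤ (∫⁻ y, ‖R z y‖ₑ * ‖F y‖ₑ ∂μ) * ENNReal.ofReal (w x) := by
          gcongr
          rw [hrep z]
          simpa only [enorm_mul] using
            enorm_integral_le_lintegral_enorm (μ := μ) fun y => R z y * F y
      _ = ∫⁻ y, ‖R z y‖ₑ * ‖F y‖ₑ * ENNReal.ofReal (w x) ∂μ :=
          (lintegral_mul_const _ (hR.of_uncurry_left.enorm.fun_mul hF.enorm)).symm
      _ ≤ _ := lintegral_mono fun y => by
          rw [mul_left_comm (ENNReal.ofReal _), mul_assoc, ← ENNReal.ofReal_mul (hm0 x y)]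
          gcongr
          exact hmw x y
  calc (∑' i, ‖F (xi i)‖ₑ * (U i).indicator (fun _ => (1 : ℝ≥0∞)) x) * ENNReal.ofReal (w x)
      ≤ ∑' i, (U i).indicator (fun _ => (1 : ℝ≥0∞)) x * ∫⁻ y, ‖R (xi i) y‖ₑ
          * (ENNReal.ofReal (m x y) * (‖F y‖ₑ * ENNReal.ofReal (w y))) ∂μ := by
        rw [← ENNReal.tsum_mul_right]
        refine ENNReal.tsum_le_tsum fun i => ?_
        rw [mul_comm _ ((U i).indicator _ x), mul_assoc]
        gcongr
        exact hsample (xi i)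
    _ = ∫⁻ y, samplingKernel U R xi m x y * (‖F y‖ₑ * ENNReal.ofReal (w y)) ∂μ := by
        simp_rw [← lintegral_const_mul _ (hg _)]
        rw [← lintegral_tsum fun i => ((hg _).const_mul _).aemeasurable]
        simp only [samplingKernel, ← ENNReal.tsum_mul_right, mul_assoc]

end SamplingKernel

theorem stmt_16_general
    {X : Type*} [MeasurableSpace X] (μ : Measure X)
    {I : Type*} [Countable I] (U : I → Set X)
    (hUmeas : ∀ i, MeasurableSet (U i))
    (hUfin : ∀ i, μ (U i) < ∞)
    (hcov : ∀ x : X, ∃ i, x ∈ U i)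
    (N : ℕ) (hN : ∀ x : X, {i : I | x ∈ U i}.encard ≤ N)
    (w : X → ℝ) (hw : ∀ x, 0 < w x) (hwm : Measurable w)
    (p : ℝ) (hp : 1 ≤ p)
    (m : X → X → ℝ) (hm1 : ∀ x y, 1 ≤ m x y)
    (hmsub : ∀ x y z, m x y ≤ m x z * m z y) (hmmeas : Measurable (Function.uncurry m))
    (hmw : ∀ x y, max (w x / w y) (w y / w x) ≤ m x y)
    (Cm : ℝ) (hCm : ∀ i, ∀ x ∈ U i, ∀ y ∈ U i, m x y ≤ Cm)
    (R Γ : X → X → ℂ) (hRmeas : Measurable (Function.uncurry R))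
    (hΓ : ∀ x y, ‖Γ x y‖ = 1)
    (hRsymm : ∀ x y, R x y = (starRingEnd ℂ) (R y x))
    (xi : I → X) (hxi : ∀ i, xi i ∈ U i)
    (A₁ A₂ : ℝ≥0∞)
    (hA1 : ∀ x, ∫⁻ y, (‖R x y‖₊ : ℝ≥0∞) * ENNReal.ofReal (m x y) ∂μ ≤ A₁)
    (hA2 : ∀ y, ∫⁻ x, (‖R x y‖₊ : ℝ≥0∞) * ENNReal.ofReal (m x y) ∂μ ≤ A₁)
    (hA3 : ∀ y, ∫⁻ x, osc U R Γ y x * ENNReal.ofReal (m x y) ∂μ ≤ A₂)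
    (F : X → ℂ) (hFm : Measurable F)
    (hrep : ∀ x, Integrable (fun y => R x y * F y) μ ∧ F x = ∫ y, R x y * F y ∂μ) :
    (∫⁻ x, (∑' i, (‖F (xi i)‖₊ : ℝ≥0∞) * (U i).indicator (fun _ => (1 : ℝ≥0∞)) x) ^ p
        * ENNReal.ofReal (w x) ^ p ∂μ) ^ (1/p)
      ≤ N * max (ENNReal.ofReal Cm * A₁) (A₁ + A₂)
        * (∫⁻ x, (‖F x‖₊ : ℝ≥0∞) ^ p * ENNReal.ofReal (w x) ^ p ∂μ) ^ (1/p) := by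
  have : SigmaFinite μ := Measure.sigmaFinite_of_countable (Set.countable_range U)
    (by rintro _ ⟨i, rfl⟩; exact hUfin i)
    (Set.eq_univ_of_forall fun x => (hcov x).elim fun i hi => ⟨U i, ⟨i, rfl⟩, hi⟩)
  have hp0 : 0 ≤ p := zero_le_one.trans hp
  have hm0 : ∀ x y, 0 ≤ m x y := fun x y => zero_le_one.trans (hm1 x y)
  have hw_le : ∀ x y, w x ≤ m x y * w y := fun x y =>
    (div_le_iff₀ (hw y)).1 ((le_max_left _ _).trans (hmw x y))
  have hRnorm : ∀ x y, ‖R x y‖ₑ = ‖R y x‖ₑ := fun x y => by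
    rw [hRsymm x y, ← ofReal_norm, ← ofReal_norm, RCLike.norm_conj]
  simp_rw [← ENNReal.mul_rpow_of_nonneg _ _ hp0]
  calc _ ≤ (∫⁻ x, (∫⁻ y, samplingKernel U R xi m x y * (‖F y‖ₑ * ENNReal.ofReal (w y)) ∂μ) ^ p
          ∂μ) ^ (1 / p) := by
        gcongr with x
        exact tsum_mul_indicator_mul_le_lintegral_samplingKernel hRmeas hmmeas hm0 hwm hw_le hFm
          (fun x => (hrep x).2) x
    _ ≤ max (N * (ENNReal.ofReal Cm * A₁)) (N * (A₁ + A₂))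
          * (∫⁻ y, (‖F y‖ₑ * ENNReal.ofReal (w y)) ^ p ∂μ) ^ (1 / p) :=
        lintegral_schur_test hp (measurable_samplingKernel hUmeas hRmeas hmmeas)
          (hFm.enorm.fun_mul hwm.ennreal_ofReal)
          (lintegral_samplingKernel_row_le hRmeas hmmeas hm0 hmsub hN hCm hxi hA1)
          (lintegral_samplingKernel_col_le hRmeas hmmeas hΓ hRnorm hN hxi hA2 hA3)
    _ = _ := by rw [← mul_max_of_nonneg _ _ zero_le]; rfl

/-- **Sampling inequality (5.11) of Lemma 5.11 specialized to `Y = L^p_w`.**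
If `F ∈ L^p_w` is reproduced by the kernel `R`, then
`‖Σ_i |F(x_i)| χ_{U_i}‖_{L^p_w} ≤ N max(C_m A₁, A₁ + A₂) ‖F‖_{L^p_w}`. -/
theorem stmt_16
    {X : Type*} [MeasurableSpace X] (μ : Measure X)
    {I : Type*} [Countable I] (U : I → Set X)
    (hUmeas : ∀ i, MeasurableSet (U i))
    (hUpos : ∀ i, 0 < μ (U i)) (hUfin : ∀ i, μ (U i) < ∞)
    (hcov : ∀ x : X, ∃ i, x ∈ U i)
    (N : ℕ) (hN : ∀ x : X, {i : I | x ∈ U i}.encard ≤ N)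
    (w : X → ℝ) (hw : ∀ x, 0 < w x) (hwm : Measurable w)
    (p : ℝ) (hp : 1 ≤ p)
    (m : X → X → ℝ) (hm1 : ∀ x y, 1 ≤ m x y) (hmsymm : ∀ x y, m x y = m y x)
    (hmsub : ∀ x y z, m x y ≤ m x z * m z y) (hmmeas : Measurable (Function.uncurry m))
    (hmw : ∀ x y, max (w x / w y) (w y / w x) ≤ m x y)
    (Cm : ℝ) (hCm : ∀ i, ∀ x ∈ U i, ∀ y ∈ U i, m x y ≤ Cm)
    (R Γ : X → X → ℂ) (hRmeas : Measurable (Function.uncurry R))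
    (hΓ : ∀ x y, ‖Γ x y‖ = 1)
    (hRsymm : ∀ x y, R x y = (starRingEnd ℂ) (R y x))
    (xi : I → X) (hxi : ∀ i, xi i ∈ U i)
    (A₁ A₂ : ℝ≥0∞)
    (hA1 : ∀ x, ∫⁻ y, (‖R x y‖₊ : ℝ≥0∞) * ENNReal.ofReal (m x y) ∂μ ≤ A₁)
    (hA2 : ∀ y, ∫⁻ x, (‖R x y‖₊ : ℝ≥0∞) * ENNReal.ofReal (m x y) ∂μ ≤ A₁)
    (hA3 : ∀ y, ∫⁻ x, osc U R Γ y x * ENNReal.ofReal (m x y) ∂μ ≤ A₂)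
    (F : X → ℂ) (hFm : Measurable F)
    (hFLp : (∫⁻ x, (‖F x‖₊ : ℝ≥0∞) ^ p * ENNReal.ofReal (w x) ^ p ∂μ) < ∞)
    (hrep : ∀ x, Integrable (fun y => R x y * F y) μ ∧ F x = ∫ y, R x y * F y ∂μ) :
    (∫⁻ x, (∑' i, (‖F (xi i)‖₊ : ℝ≥0∞) * (U i).indicator (fun _ => (1 : ℝ≥0∞)) x) ^ p
        * ENNReal.ofReal (w x) ^ p ∂μ) ^ (1/p)
      ≤ N * max (ENNReal.ofReal Cm * A₁) (A₁ + A₂)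
        * (∫⁻ x, (‖F x‖₊ : ℝ≥0∞) ^ p * ENNReal.ofReal (w x) ^ p ∂μ) ^ (1/p) :=
  stmt_16_general μ U hUmeas hUfin hcov N hN w hw hwm p hp m hm1 hmsub hmmeas hmw Cm hCm R Γ hRmeas
    hΓ hRsymm xi hxi A₁ A₂ hA1 hA2 hA3 F hFm hrep
end
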